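/- arXiv:1604.06612 — 4 statements merged into one kernel-verified Lean document; each statement's English description precedes it below -/
import Mathlib

section
/- For every z > 0, the Gauss measure of the set of x in [0,1) whose n-th continued fraction digit a_n(x) is at least z equals (1/log 2) · log(1 + 1/⌈z⌉). -/
open MeasureTheory Filter Set

/-- The Gauss map `τ(x) = 1/x - ⌊1/x⌋`, with `τ(0) = 0`. -/
noncomputable def gaussMap (x : ℝ) : ℝ := if x = 0 then 0 else 1 / x - ⌊1 / x⌋

/-- The `n`-th continued fraction digit `a_n(x) = ⌊1/τ^{n-1}(x)⌋`. -/
noncomputable def cfDigit (n : ℕ) (x : ℝ) : ℕ := ⌊1 / (gaussMap^[n - 1] x)⌋₊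

/-- The Gauss measure on `[0,1)` with density `1/((x+1) log 2)`. -/
noncomputable def gaussMeasure : Measure ℝ :=
  (volume.restrict (Set.Ico (0 : ℝ) 1)).withDensity
    (fun x => ENNReal.ofReal (1 / ((x + 1) * Real.log 2)))

/-!
The Gauss measure is invariant under the Gauss map. Indeed, for `0 ≤ a < 1` the preimage of
`[0, a]` meets `(0, 1]` in the disjoint intervals `[1/(j + a), 1/j]`, `j ≥ 1`, whose measures
telescope to `log (1 + a) / log 2`, the measure of `[0, a]`; a finite measure on `ℝ` is determined
by its values on half-lines. Since `a_n = a_1 ∘ τ^{n-1}` and `{a_1 ≥ k} = (0, 1/k]`, the event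
`{a_n ≥ z}` has the measure of `(0, 1/⌈z⌉]`. The rationals, where the digits are meaningless,
form a null set.
-/

theorem Antitone.hasSum_sub_succ {f : ℕ → ℝ} {l : ℝ} (hf : Antitone f)
    (hl : Tendsto f atTop (nhds l)) : HasSum (fun n => f n - f (n + 1)) (f 0 - l) := by
  rw [hasSum_iff_tendsto_nat_of_nonneg fun n => sub_nonneg.2 (hf n.le_succ)]
  simpa only [Finset.sum_range_sub'] using tendsto_const_nhds.sub hl

lemma log_one_add_one_div_sub_log_one_add_one_div {t : ℝ} (ht : 0 < t) {a : ℝ} (ha : 0 ≤ a) :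
    Real.log (1 + 1 / t) - Real.log (1 + 1 / (t + a)) =
      Real.log (1 + a / t) - Real.log (1 + a / (t + 1)) := by
  have h (c d : ℝ) (hd : 0 < d) (hcd : 0 < d + c) :
      Real.log (1 + c / d) = Real.log (d + c) - Real.log d := by
    rw [← Real.log_div hcd.ne' hd.ne', add_div, div_self hd.ne']
  rw [h 1 t ht (by linarith), h 1 (t + a) (by linarith) (by linarith), h a t ht (by linarith),
    h a (t + 1) (by linarith) (by linarith)]
  ring_nf

lemma measure_compl_setOf_irrational (μ : Measure ℝ) [NullSingletonClass μ] :
    μ {x | Irrational x}ᶜ = 0 := by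
  rw [show {x : ℝ | Irrational x} = (range ((↑) : ℚ → ℝ))ᶜ from rfl, compl_compl]
  exact (countable_range _).measure_zero μ

lemma natCast_le_floor_one_div_iff {k : ℕ} (hk : 0 < k) {y : ℝ} :
    k ≤ ⌊1 / y⌋₊ ↔ y ∈ Ioc (0 : ℝ) (1 / k) := by
  rcases le_or_gt y 0 with hy | hy
  · have h0 : ⌊1 / y⌋₊ = 0 := Nat.floor_eq_zero.2 ((one_div_nonpos.2 hy).trans_lt one_pos)
    simp only [h0, mem_Ioc, hy.not_gt, false_and, iff_false, not_le]
    exact hk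
  · rw [Nat.le_floor_iff (by positivity), mem_Ioc, le_one_div (by positivity) hy]
    exact ⟨fun h => ⟨hy, h⟩, And.right⟩

lemma measurable_gaussMap : Measurable gaussMap := by
  have h : Measurable fun x : ℝ => 1 / x := measurable_const.div measurable_id
  exact Measurable.ite (measurableSet_singleton 0) measurable_const
    (h.sub (measurable_from_top.comp h.floor))

lemma gaussMap_eq_fract (x : ℝ) : gaussMap x = Int.fract (1 / x) := by
  rcases eq_or_ne x 0 with rfl | hx
  · simp [gaussMap]
  · rw [gaussMap, if_neg hx, Int.fract]

lemma gaussMap_nonneg (x : ℝ) : 0 ≤ gaussMap x :=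
  gaussMap_eq_fract x ▸ Int.fract_nonneg _

lemma gaussMap_lt_one (x : ℝ) : gaussMap x < 1 :=
  gaussMap_eq_fract x ▸ Int.fract_lt_one _

lemma gaussMap_of_pos {x : ℝ} (hx : 0 < x) : gaussMap x = 1 / x - ⌊1 / x⌋₊ := by
  rw [gaussMap_eq_fract, Int.fract, ← Int.natCast_floor_eq_floor (by positivity)]
  push_cast; rfl

lemma gaussMap_preimage_Iic_inter_Ioc {a : ℝ} (ha₀ : 0 ≤ a) (ha₁ : a < 1) :
    gaussMap ⁻¹' Iic a ∩ Ioc 0 1 = ⋃ j : ℕ, Icc (1 / (j + 1 + a)) (1 / (j + 1)) := by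
  ext x
  simp only [mem_inter_iff, mem_preimage, mem_Iic, mem_Ioc, mem_iUnion, mem_Icc]
  constructor
  · rintro ⟨hτ, hx₀, hx₁⟩
    rw [gaussMap_of_pos hx₀] at hτ
    have hfloor : 1 ≤ ⌊1 / x⌋₊ := Nat.le_floor (by simpa using one_le_one_div hx₀ hx₁)
    have hcast : ((⌊1 / x⌋₊ - 1 : ℕ) : ℝ) + 1 = ⌊1 / x⌋₊ := by
      rw [Nat.cast_sub hfloor, Nat.cast_one, sub_add_cancel]
    refine ⟨⌊1 / x⌋₊ - 1, ?_, ?_⟩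
    · rw [hcast, one_div_le (by positivity) hx₀]
      linarith
    · rw [hcast, le_one_div hx₀ (Nat.cast_pos.2 hfloor)]
      exact Nat.floor_le (by positivity)
  · rintro ⟨j, hlo, hhi⟩
    have hx₀ : 0 < x := (by positivity : (0 : ℝ) < 1 / (j + 1 + a)).trans_le hlo
    have hx₁ : x ≤ 1 := hhi.trans (div_le_one_of_le₀ (by simp) (by positivity))
    rw [one_div_le (by positivity) hx₀] at hlo
    rw [le_one_div hx₀ (by positivity)] at hhi
    have hfloor : ⌊1 / x⌋₊ = j + 1 := by
      rw [Nat.floor_eq_iff (by positivity)]; push_cast; constructor <;> linarith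
    refine ⟨?_, hx₀, hx₁⟩
    rw [gaussMap_of_pos hx₀, hfloor]; push_cast; linarith

instance : NullSingletonClass gaussMeasure := by
  unfold gaussMeasure; infer_instance

lemma gaussMeasure_compl_Icc : gaussMeasure (Icc 0 1)ᶜ = 0 := by
  refine withDensity_absolutelyContinuous _ _ ?_
  rw [Measure.restrict_apply' measurableSet_Ico,
    disjoint_compl_left_iff_subset.2 Ico_subset_Icc_self |>.inter_eq, measure_empty]

lemma gaussMeasure_inter_Icc (s : Set ℝ) : gaussMeasure (s ∩ Icc 0 1) = gaussMeasure s :=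
  measure_inter_conull gaussMeasure_compl_Icc

lemma gaussMeasure_inter_Ioc (s : Set ℝ) : gaussMeasure (s ∩ Ioc 0 1) = gaussMeasure s :=
  measure_inter_conull <| (measure_congr (Ioc_ae_eq_Icc.compl)).trans gaussMeasure_compl_Icc

lemma gaussMeasure_Icc {a b : ℝ} (ha : 0 ≤ a) (hab : a ≤ b) (hb : b ≤ 1) :
    gaussMeasure (Icc a b) =
      ENNReal.ofReal ((Real.log (1 + b) - Real.log (1 + a)) / Real.log 2) := by
  have hpos : ∀ x ∈ Icc a b, 0 < x + 1 := fun x hx => by linarith [hx.1]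
  have hcont : ContinuousOn (fun x : ℝ => 1 / ((x + 1) * Real.log 2)) (Icc a b) :=
    continuousOn_const.div (by fun_prop) fun x hx =>
      mul_ne_zero (hpos x hx).ne' (Real.log_pos one_lt_two).ne'
  have hderiv : ∀ x ∈ uIcc a b, HasDerivAt (fun x => Real.log (1 + x) / Real.log 2)
      (1 / ((x + 1) * Real.log 2)) x := by
    intro x hx
    rw [uIcc_of_le hab] at hx
    rw [← div_div, add_comm x 1]
    exact ((hasDerivAt_id' x).const_add 1).log (by linarith [hpos x hx]) |>.div_const _
  have hIcc : (Icc a b ∩ Ico 0 1 : Set ℝ) =ᵐ[volume] Icc a b := by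
    have h := (EventuallyEq.refl _ (Icc a b)).inter
      (Ico_ae_eq_Icc (μ := volume) (a := (0 : ℝ)) (b := 1))
    rwa [inter_eq_left.2 (Icc_subset_Icc ha hb)] at h
  have hnonneg : 0 ≤ᵐ[volume.restrict (Icc a b)] fun x => 1 / ((x + 1) * Real.log 2) :=
    (ae_restrict_iff' measurableSet_Icc).2 <| ae_of_all _ fun x hx => by
      have := hpos x hx; have := Real.log_pos one_lt_two; positivity
  rw [gaussMeasure, withDensity_apply _ measurableSet_Icc,
    Measure.restrict_restrict measurableSet_Icc, setLIntegral_congr hIcc,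
    ← ofReal_integral_eq_lintegral_ofReal hcont.integrableOn_Icc hnonneg,
    integral_Icc_eq_integral_Ioc, ← intervalIntegral.integral_of_le hab,
    intervalIntegral.integral_eq_sub_of_hasDerivAt hderiv
      (hcont.intervalIntegrable_of_Icc hab), sub_div]

instance : IsProbabilityMeasure gaussMeasure := by
  constructor
  rw [← gaussMeasure_inter_Icc, univ_inter, gaussMeasure_Icc le_rfl zero_le_one le_rfl]
  norm_num [(Real.log_pos one_lt_two).ne']

lemma gaussMeasure_Iic {a : ℝ} (ha₀ : 0 ≤ a) (ha₁ : a ≤ 1) :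
    gaussMeasure (Iic a) = ENNReal.ofReal (Real.log (1 + a) / Real.log 2) := by
  have h : Iic a ∩ Icc 0 1 = Icc 0 a := by
    ext x; simp only [mem_inter_iff, mem_Iic, mem_Icc]; grind
  rw [← gaussMeasure_inter_Icc, h, gaussMeasure_Icc le_rfl ha₀ ha₁]
  norm_num

open Function in
lemma pairwise_disjoint_Icc_one_div {a : ℝ} (ha₀ : 0 ≤ a) (ha₁ : a < 1) :
    Pairwise (Disjoint on fun j : ℕ => Icc (1 / (j + 1 + a)) (1 / (j + 1 : ℝ))) := by
  refine (pairwise_disjoint_on _).2 fun i j hij => disjoint_left.2 fun x hi hj => ?_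
  have hij' : (i : ℝ) + 1 ≤ j := by exact_mod_cast hij
  have : 1 / ((j : ℝ) + 1) < 1 / (i + 1 + a) :=
    one_div_lt_one_div_of_lt (by positivity) (by linarith)
  linarith [hi.1, hj.2]

lemma gaussMeasure_preimage_Iic {a : ℝ} (ha₀ : 0 ≤ a) (ha₁ : a < 1) :
    gaussMeasure (gaussMap ⁻¹' Iic a) = ENNReal.ofReal (Real.log (1 + a) / Real.log 2) := by
  set g : ℕ → ℝ := fun j => Real.log (1 + a / (j + 1)) / Real.log 2
  have hg : Antitone g := fun i j hij => by
    have : (i : ℝ) ≤ j := by exact_mod_cast hij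
    simp only [g]
    gcongr
  have hg_lim : Tendsto g atTop (nhds 0) := by
    have h := ((tendsto_one_div_add_atTop_nhds_zero_nat.const_mul a).const_add 1).log
      (by norm_num) |>.div_const (Real.log 2)
    simpa [g, div_eq_mul_inv] using h
  have hterm (j : ℕ) : gaussMeasure (Icc (1 / (j + 1 + a)) (1 / (j + 1))) =
      ENNReal.ofReal (g j - g (j + 1)) := by
    rw [gaussMeasure_Icc (by positivity) (one_div_le_one_div_of_le (by positivity) (by linarith))
      (div_le_one_of_le₀ (by simp) (by positivity)), ← sub_div,
      log_one_add_one_div_sub_log_one_add_one_div (by positivity) ha₀]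
    push_cast
    ring_nf
  rw [← gaussMeasure_inter_Ioc, gaussMap_preimage_Iic_inter_Ioc ha₀ ha₁,
    measure_iUnion (pairwise_disjoint_Icc_one_div ha₀ ha₁) fun _ => measurableSet_Icc]
  simp_rw [hterm]
  have hsum := hg.hasSum_sub_succ hg_lim
  rw [← ENNReal.ofReal_tsum_of_nonneg (fun j => sub_nonneg.2 (hg j.le_succ)) hsum.summable,
    hsum.tsum_eq]
  simp [g]

lemma measurePreserving_gaussMap : MeasurePreserving gaussMap gaussMeasure gaussMeasure := by
  refine ⟨measurable_gaussMap, Measure.ext_of_Iic _ _ fun a => ?_⟩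
  rw [Measure.map_apply measurable_gaussMap measurableSet_Iic]
  rcases lt_or_ge a 0 with ha₀ | ha₀
  · have hpre : gaussMap ⁻¹' Iic a = ∅ :=
      eq_empty_of_forall_notMem fun x hx => (gaussMap_nonneg x).not_gt (lt_of_le_of_lt hx ha₀)
    have hIic : Iic a ∩ Icc 0 1 = ∅ :=
      eq_empty_of_forall_notMem fun x hx => hx.2.1.not_gt (lt_of_le_of_lt hx.1 ha₀)
    rw [hpre, ← gaussMeasure_inter_Icc (Iic a), hIic]
  rcases lt_or_ge a 1 with ha₁ | ha₁
  · rw [gaussMeasure_preimage_Iic ha₀ ha₁, gaussMeasure_Iic ha₀ ha₁.le]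
  · have hpre : gaussMap ⁻¹' Iic a = univ :=
      eq_univ_of_forall fun x => (gaussMap_lt_one x).le.trans ha₁
    have hIic : Iic a ∩ Icc 0 1 = univ ∩ Icc 0 1 := by
      rw [univ_inter, inter_eq_right]
      exact fun x hx => hx.2.trans ha₁
    rw [hpre, ← gaussMeasure_inter_Icc (Iic a), hIic, gaussMeasure_inter_Icc]

theorem gauss_measure_digit_ge_general (z : ℝ) (hz : 0 < z) (n : ℕ) :
    gaussMeasure {x | Irrational x ∧ z ≤ (cfDigit n x : ℝ)} =
      ENNReal.ofReal ((1 / Real.log 2) * Real.log (1 + 1 / (⌈z⌉₊ : ℝ))) := by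
  have hk : 0 < ⌈z⌉₊ := Nat.ceil_pos.2 hz
  have hset : {x | Irrational x ∧ z ≤ (cfDigit n x : ℝ)} =
      gaussMap^[n - 1] ⁻¹' Ioc 0 (1 / ⌈z⌉₊) ∩ {x | Irrational x} := by
    ext x
    simp only [mem_ofPred_eq, mem_inter_iff, mem_preimage, cfDigit, ← Nat.ceil_le,
      natCast_le_floor_one_div_iff hk]
    exact and_comm
  rw [hset, measure_inter_conull (measure_compl_setOf_irrational gaussMeasure),
    (measurePreserving_gaussMap.iterate _).measure_preimage measurableSet_Ioc.nullMeasurableSet,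
    measure_congr Ioc_ae_eq_Icc,
    gaussMeasure_Icc le_rfl (by positivity)
      (div_le_one_of_le₀ (by exact_mod_cast hk) (by positivity))]
  congr 1
  simp only [add_zero, Real.log_one, sub_zero]
  ring

theorem gauss_measure_digit_ge (z : ℝ) (hz : 0 < z) (n : ℕ) (hn : 1 ≤ n) :
    gaussMeasure {x | Irrational x ∧ z ≤ (cfDigit n x : ℝ)} =
      ENNReal.ofReal ((1 / Real.log 2) * Real.log (1 + 1 / (⌈z⌉₊ : ℝ))) :=
  gauss_measure_digit_ge_general z hz n
end

section
/- Borel–Bernstein Theorem (divergence direction): if (b_n) is a sequence of positive reals with Σ_n 1/b_n = ∞, then for Lebesgue-almost every x in [0,1), the inequality a_n(x) ≥ b_n holds for infinitely many n. -/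
open MeasureTheory Filter Set

/-!
On the cylinder of a digit word `w` of length `k`, a point is `x = ψ_w(t)` with `t = T^k x`,
where `T` is the Gauss map and `ψ_w(t) = [0; w₀, …, w_{k-1} + t]` is a Möbius map with
`|ψ_w(s) - ψ_w(t)| = |s - t| / (Q_w(s) Q_w(t))` for an increasing affine `Q_w ≥ 1`. Hence the
event `T^k x > 1/m`, which contains `a_{k+1}(x) < m`, fills at most the fraction `1 - 1/m` of
every cylinder of rank `k`. Iterating over cylinders, the set where all digits `a_{i+1}` with
`i ≥ N` stay below `m_i = ⌈b_{i+1}⌉` has measure at most `∏ (1 - 1/m_i) ≤ exp (-∑ 1/m_i) = 0`,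
since `∑ 1/⌈b_i⌉` diverges together with `∑ 1/b_i`.
-/

lemma summable_one_div_of_summable_one_div_add_one {b : ℕ → ℝ} (hb : ∀ n, 0 < b n)
    (h : Summable fun n => 1 / (b n + 1)) : Summable fun n => 1 / b n := by
  refine (h.mul_left 2).of_norm_bounded_eventually_nat ?_
  filter_upwards [h.tendsto_atTop_zero.eventually_lt_const (by norm_num : (0 : ℝ) < 1 / 2)]
    with n hn
  have hbn := hb n
  have h1 : 1 < b n := by
    rw [div_lt_div_iff₀ (by linarith) two_pos] at hn
    linarith
  rw [Real.norm_of_nonneg (by positivity), mul_one_div, div_le_div_iff₀ hbn (by linarith)]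
  linarith

lemma not_summable_one_div_natCeil {b : ℕ → ℝ} (hb : ∀ n, 0 < b n)
    (h : ¬ Summable fun n => 1 / b n) : ¬ Summable fun n => 1 / (⌈b n⌉₊ : ℝ) := fun hceil =>
  h <| summable_one_div_of_summable_one_div_add_one hb <|
    hceil.of_nonneg_of_le (fun n => by have := hb n; positivity) fun n =>
      one_div_le_one_div_of_le (Nat.cast_pos.mpr (Nat.ceil_pos.mpr (hb n)))
        (Nat.ceil_lt_add_one (hb n).le).le

namespace BorelBernstein

/-- `cfBranch w t = [0; w₀, …, w_{k-1} + t]`. -/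
noncomputable def cfBranch : List ℕ → ℝ → ℝ
  | [], t => t
  | j :: w, t => 1 / (j + cfBranch w t)

/-- `cfDenom w t = q_k + t q_{k-1}` for the denominators `q_i` of the convergents of `w`. -/
noncomputable def cfDenom : List ℕ → ℝ → ℝ
  | [], _ => 1
  | j :: w, t => (j + cfBranch w t) * cfDenom w t

section Branch

variable {w : List ℕ} {s t : ℝ}

variable (w) in
lemma cfBranch_nonneg (ht : 0 ≤ t) : 0 ≤ cfBranch w t := by
  induction w with
  | nil => exact ht
  | cons j w ih => exact one_div_nonneg.mpr (by positivity)

variable (w) in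
lemma one_le_natCast_add_cfBranch {j : ℕ} (hj : 0 < j) (ht : 0 ≤ t) :
    1 ≤ (j : ℝ) + cfBranch w t := by
  have : (1 : ℝ) ≤ j := by exact_mod_cast hj
  linarith [cfBranch_nonneg w ht]

lemma one_le_cfDenom (hw : ∀ j ∈ w, 0 < j) (ht : 0 ≤ t) : 1 ≤ cfDenom w t := by
  induction w with
  | nil => exact le_rfl
  | cons j w ih =>
    simp only [List.mem_cons, forall_eq_or_imp] at hw
    exact one_le_mul_of_one_le_of_one_le (one_le_natCast_add_cfBranch w hw.1 ht) (ih hw.2)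

lemma cfBranch_sub_cfBranch (hw : ∀ j ∈ w, 0 < j) (hs : 0 ≤ s) (ht : 0 ≤ t) :
    cfBranch w s - cfBranch w t = (-1) ^ w.length * (s - t) / (cfDenom w s * cfDenom w t) := by
  induction w with
  | nil => simp [cfBranch, cfDenom]
  | cons j w ih =>
    simp only [List.mem_cons, forall_eq_or_imp] at hw
    have hs' := one_le_natCast_add_cfBranch w hw.1 hs
    have ht' := one_le_natCast_add_cfBranch w hw.1 ht
    have hQs := one_le_cfDenom hw.2 hs
    have hQt := one_le_cfDenom hw.2 ht
    simp only [cfBranch, cfDenom, List.length_cons, pow_succ]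
    rw [div_sub_div _ _ (by positivity) (by positivity)]
    rw [show 1 * ((j : ℝ) + cfBranch w t) - ((j : ℝ) + cfBranch w s) * 1
      = -(cfBranch w s - cfBranch w t) by ring, ih hw.2]
    field_simp

lemma abs_cfBranch_sub_cfBranch (hw : ∀ j ∈ w, 0 < j) (hs : 0 ≤ s) (ht : 0 ≤ t) :
    |cfBranch w s - cfBranch w t| = |s - t| / (cfDenom w s * cfDenom w t) := by
  have hQs := one_le_cfDenom hw hs
  have hQt := one_le_cfDenom hw ht
  rw [cfBranch_sub_cfBranch hw hs ht, abs_div, abs_mul,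
    abs_of_pos (mul_pos (by linarith) (by linarith) : 0 < cfDenom w s * cfDenom w t)]
  simp

/-- `cfBranch w t * cfDenom w t = p_k + t p_{k-1}` is the numerator, which the induction has to
carry along: prepending `j` maps `(p, q)` to `(q, j q + p)`. -/
lemma monotoneOn_cfDenom (hw : ∀ j ∈ w, 0 < j) :
    MonotoneOn (cfDenom w) (Ici 0) ∧
      MonotoneOn (fun t => cfBranch w t * cfDenom w t) (Ici 0) := by
  induction w with
  | nil => exact ⟨monotoneOn_const, fun s _ t _ hst => by simpa [cfBranch, cfDenom] using hst⟩
  | cons j w ih =>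
    simp only [List.mem_cons, forall_eq_or_imp] at hw
    obtain ⟨hQ, hP⟩ := ih hw.2
    constructor
    · intro s hs t ht hst
      have hPst : cfBranch w s * cfDenom w s ≤ cfBranch w t * cfDenom w t := hP hs ht hst
      have hjQ := mul_le_mul_of_nonneg_left (hQ hs ht hst) (Nat.cast_nonneg (α := ℝ) j)
      simp only [cfDenom]
      linarith
    · refine hQ.congr fun t ht => ?_
      have := one_le_natCast_add_cfBranch w hw.1 ht
      simp only [cfBranch, cfDenom]
      field_simp

end Branch

def unitIrrationals : Set ℝ := Ioo 0 1 ∩ {x | Irrational x}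

local notation "𝕀" => unitIrrationals

lemma gaussMap_of_ne_zero {x : ℝ} (hx : x ≠ 0) : gaussMap x = Int.fract (1 / x) := by
  rw [gaussMap, if_neg hx, Int.fract]

lemma mapsTo_gaussMap : MapsTo gaussMap 𝕀 𝕀 := by
  rintro x ⟨hx, hirr⟩
  have hfract : Irrational (Int.fract (1 / x)) := by
    rw [Int.fract, one_div]
    exact hirr.inv.sub_intCast _
  rw [gaussMap_of_ne_zero hx.1.ne']
  exact ⟨⟨(Int.fract_nonneg _).lt_of_ne' hfract.ne_zero, Int.fract_lt_one _⟩, hfract⟩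

/-- The continued fraction digits counted from `0`: `digit n x = cfDigit (n + 1) x`. -/
noncomputable def digit (n : ℕ) (x : ℝ) : ℕ := ⌊1 / gaussMap^[n] x⌋₊

noncomputable def digits (k : ℕ) (x : ℝ) : List ℕ := List.ofFn fun i : Fin k => digit i x

@[simp]
lemma length_digits (k : ℕ) (x : ℝ) : (digits k x).length = k := List.length_ofFn

lemma cfDigit_succ (n : ℕ) (x : ℝ) : cfDigit (n + 1) x = digit n x := rfl

lemma digit_succ (n : ℕ) (x : ℝ) : digit (n + 1) x = digit n (gaussMap x) := by
  simp only [digit, Function.iterate_succ_apply]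

lemma digits_succ (k : ℕ) (x : ℝ) :
    digits (k + 1) x = digit 0 x :: digits k (gaussMap x) := by
  simp only [digits, List.ofFn_succ, Fin.val_zero, Fin.val_succ, digit_succ]

lemma digit_zero_pos {x : ℝ} (hx : x ∈ 𝕀) : 0 < digit 0 x := by
  have : 1 ≤ 1 / x := by rw [le_div_iff₀ hx.1.1]; linarith [hx.1.2]
  exact Nat.floor_pos.mpr (by simpa using this)

lemma eq_one_div_digit_add_gaussMap {x : ℝ} (hx : x ∈ 𝕀) :
    x = 1 / (digit 0 x + gaussMap x) := by
  have h : (digit 0 x : ℝ) = ⌊1 / x⌋ := by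
    simpa [digit] using natCast_floor_eq_intCast_floor (one_div_pos.mpr hx.1.1).le
  rw [gaussMap_of_ne_zero hx.1.1.ne', h, Int.floor_add_fract, one_div_one_div]

section Prepend

variable {j : ℕ} {t : ℝ}

lemma one_div_natCast_add_mem (hj : 0 < j) (ht : t ∈ 𝕀) : 1 / (j + t) ∈ 𝕀 := by
  have hj1 : (1 : ℝ) ≤ j := by exact_mod_cast hj
  have hpos : 0 < (j : ℝ) + t := by linarith [ht.1.1]
  refine ⟨⟨one_div_pos.mpr hpos, ?_⟩, ?_⟩
  · rw [div_lt_one (by linarith [ht.1.1])]; linarith [ht.1.1]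
  · rw [one_div]; exact (ht.2.natCast_add j).inv

lemma gaussMap_one_div_natCast_add (hj : 0 < j) (ht : t ∈ 𝕀) :
    gaussMap (1 / (j + t)) = t := by
  rw [gaussMap_of_ne_zero (one_div_natCast_add_mem hj ht).1.1.ne', one_div_one_div,
    Int.fract_natCast_add, Int.fract_eq_self.mpr ⟨ht.1.1.le, ht.1.2⟩]

lemma digit_zero_one_div_natCast_add (ht : t ∈ 𝕀) : digit 0 (1 / (j + t)) = j := by
  simp only [digit, Function.iterate_zero, id, one_div_one_div]
  rw [add_comm, Nat.floor_add_natCast ht.1.1.le, Nat.floor_eq_zero.mpr ht.1.2, zero_add]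

end Prepend

lemma cfBranch_spec {w : List ℕ} (hw : ∀ j ∈ w, 0 < j) {t : ℝ} (ht : t ∈ 𝕀) :
    cfBranch w t ∈ 𝕀 ∧ gaussMap^[w.length] (cfBranch w t) = t ∧
      digits w.length (cfBranch w t) = w := by
  induction w with
  | nil => exact ⟨ht, rfl, rfl⟩
  | cons j w ih =>
    simp only [List.mem_cons, forall_eq_or_imp] at hw
    obtain ⟨hmem, hiter, hdigits⟩ := ih hw.2
    refine ⟨one_div_natCast_add_mem hw.1 hmem, ?_, ?_⟩
    · rw [List.length_cons, Function.iterate_succ_apply, cfBranch,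
        gaussMap_one_div_natCast_add hw.1 hmem, hiter]
    · rw [List.length_cons, digits_succ, cfBranch, gaussMap_one_div_natCast_add hw.1 hmem,
        hdigits, digit_zero_one_div_natCast_add hmem]

lemma cfBranch_digits {x : ℝ} (hx : x ∈ 𝕀) (k : ℕ) :
    cfBranch (digits k x) (gaussMap^[k] x) = x := by
  induction k generalizing x with
  | zero => rfl
  | succ k ih =>
    rw [digits_succ, cfBranch, Function.iterate_succ_apply, ih (mapsTo_gaussMap hx),
      ← eq_one_div_digit_add_gaussMap hx]

lemma digits_pos {x : ℝ} (hx : x ∈ 𝕀) (k : ℕ) : ∀ j ∈ digits k x, 0 < j := by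
  induction k generalizing x with
  | zero => simp [digits]
  | succ k ih =>
    rw [digits_succ]
    simpa [digit_zero_pos hx] using ih (mapsTo_gaussMap hx)

def cylinder (w : List ℕ) : Set ℝ := {x | x ∈ 𝕀 ∧ digits w.length x = w}

lemma cylinder_inter_preimage {w : List ℕ} (hw : ∀ j ∈ w, 0 < j) (S : Set ℝ) :
    cylinder w ∩ gaussMap^[w.length] ⁻¹' S = cfBranch w '' (𝕀 ∩ S) := by
  ext x
  constructor
  · rintro ⟨⟨hx, hdigits⟩, hS⟩
    refine ⟨_, ⟨mapsTo_gaussMap.iterate _ hx, hS⟩, ?_⟩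
    simpa only [hdigits] using cfBranch_digits hx w.length
  · rintro ⟨t, ⟨ht, hS⟩, rfl⟩
    obtain ⟨hmem, hiter, hdigits⟩ := cfBranch_spec hw ht
    exact ⟨⟨hmem, hdigits⟩, by rwa [mem_preimage, hiter]⟩

section Volume

variable {w : List ℕ}

lemma irrational_of_irrational_cfBranch {t : ℝ} (h : Irrational (cfBranch w t)) : Irrational t := by
  induction w with
  | nil => exact h
  | cons j w ih => exact ih ((h.of_one_div).of_natCast_add j)

lemma lipschitzOnWith_cfBranch (hw : ∀ j ∈ w, 0 < j) :
    LipschitzOnWith 1 (cfBranch w) (Ici 0) := by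
  refine LipschitzOnWith.of_dist_le_mul fun s hs t ht => ?_
  rw [NNReal.coe_one, one_mul, Real.dist_eq, Real.dist_eq, abs_cfBranch_sub_cfBranch hw hs ht]
  exact div_le_self (abs_nonneg _) (one_le_mul_of_one_le_of_one_le
    (one_le_cfDenom hw hs) (one_le_cfDenom hw ht))

lemma monotoneOn_or_antitoneOn_cfBranch (hw : ∀ j ∈ w, 0 < j) :
    MonotoneOn (cfBranch w) (Ici 0) ∨ AntitoneOn (cfBranch w) (Ici 0) := by
  have hQ : ∀ s ∈ Ici (0 : ℝ), ∀ t ∈ Ici (0 : ℝ), 0 < cfDenom w s * cfDenom w t :=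
    fun s hs t ht => mul_pos (one_pos.trans_le (one_le_cfDenom hw hs))
      (one_pos.trans_le (one_le_cfDenom hw ht))
  rcases Nat.even_or_odd w.length with h | h
  · refine .inl fun s hs t ht hst => sub_nonneg.mp ?_
    rw [cfBranch_sub_cfBranch hw ht hs, h.neg_one_pow, one_mul]
    exact div_nonneg (sub_nonneg.mpr hst) (hQ t ht s hs).le
  · refine .inr fun s hs t ht hst => sub_nonneg.mp ?_
    rw [cfBranch_sub_cfBranch hw hs ht, h.neg_one_pow, neg_one_mul, neg_sub]
    exact div_nonneg (sub_nonneg.mpr hst) (hQ s hs t ht).le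

lemma cfBranch_image_Icc (hw : ∀ j ∈ w, 0 < j) {a b : ℝ} (ha : 0 ≤ a) (hab : a ≤ b) :
    cfBranch w '' Icc a b = uIcc (cfBranch w a) (cfBranch w b) := by
  have hsub : uIcc a b ⊆ Ici 0 := by
    rw [uIcc_of_le hab]; exact fun t ht => ha.trans ht.1
  have hcont := ((lipschitzOnWith_cfBranch hw).continuousOn).mono hsub
  rw [← uIcc_of_le hab]
  rcases monotoneOn_or_antitoneOn_cfBranch hw with h | h
  · exact hcont.image_uIcc_of_monotoneOn (h.mono hsub)
  · exact hcont.image_uIcc_of_antitoneOn (h.mono hsub)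

/-- Since `cfBranch w` maps rationals to rationals, restricting to irrationals costs only a
countable set. -/
lemma cfBranch_image_inter_Icc_ae_eq (hw : ∀ j ∈ w, 0 < j) {a b : ℝ} (ha : 0 ≤ a)
    (hab : a ≤ b) (hb : b ≤ 1) :
    cfBranch w '' (𝕀 ∩ Icc a b) =ᵐ[volume] uIcc (cfBranch w a) (cfBranch w b) := by
  rw [ae_eq_set, ← cfBranch_image_Icc hw ha hab]
  refine ⟨by rw [sdiff_eq_empty.mpr (image_mono inter_subset_right), measure_empty], ?_⟩
  refine measure_mono_null ?_ ((countable_range ((↑) : ℚ → ℝ)).measure_zero volume)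
  rintro _ ⟨⟨t, ht, rfl⟩, hnot⟩
  by_contra hirr
  have htirr := irrational_of_irrational_cfBranch hirr
  exact hnot ⟨t, ⟨⟨⟨(ha.trans ht.1).lt_of_ne' htirr.ne_zero,
    (ht.2.trans hb).lt_of_ne htirr.ne_one⟩, htirr⟩, ht⟩, rfl⟩

lemma volume_cylinder_inter_preimage_Icc (hw : ∀ j ∈ w, 0 < j) {a b : ℝ} (ha : 0 ≤ a)
    (hab : a ≤ b) (hb : b ≤ 1) :
    volume (cylinder w ∩ gaussMap^[w.length] ⁻¹' Icc a b) =
      ENNReal.ofReal ((b - a) / (cfDenom w a * cfDenom w b)) := by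
  rw [cylinder_inter_preimage hw, measure_congr (cfBranch_image_inter_Icc_ae_eq hw ha hab hb),
    Real.volume_interval, abs_cfBranch_sub_cfBranch hw (ha.trans hab) ha,
    abs_of_nonneg (sub_nonneg.mpr hab), mul_comm (cfDenom w b)]

lemma cylinder_eq_inter_preimage_Icc (w : List ℕ) :
    cylinder w = cylinder w ∩ gaussMap^[w.length] ⁻¹' Icc 0 1 :=
  (inter_eq_left.mpr fun _ hx => mem_preimage.mpr
    (Ioo_subset_Icc_self (mapsTo_gaussMap.iterate w.length hx.1).1)).symm

lemma nullMeasurableSet_cylinder (hw : ∀ j ∈ w, 0 < j) :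
    NullMeasurableSet (cylinder w) volume := by
  rw [cylinder_eq_inter_preimage_Icc, cylinder_inter_preimage hw]
  exact measurableSet_uIcc.nullMeasurableSet.congr
    (cfBranch_image_inter_Icc_ae_eq hw le_rfl zero_le_one le_rfl).symm

lemma volume_cylinder (hw : ∀ j ∈ w, 0 < j) :
    volume (cylinder w) = ENNReal.ofReal (1 / (cfDenom w 0 * cfDenom w 1)) := by
  rw [cylinder_eq_inter_preimage_Icc,
    volume_cylinder_inter_preimage_Icc hw le_rfl zero_le_one le_rfl, sub_zero]

lemma volume_cylinder_inter_lt_le (hw : ∀ j ∈ w, 0 < j) {u : ℝ} (hu0 : 0 ≤ u)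
    (hu1 : u ≤ 1) :
    volume (cylinder w ∩ {x | u < gaussMap^[w.length] x}) ≤
      ENNReal.ofReal (1 - u) * volume (cylinder w) := by
  have hsub : cylinder w ∩ {x | u < gaussMap^[w.length] x} ⊆
      cylinder w ∩ gaussMap^[w.length] ⁻¹' Icc u 1 := fun x ⟨hx, hu⟩ =>
    ⟨hx, hu.le, (mapsTo_gaussMap.iterate _ hx.1).1.2.le⟩
  have hQ0 := one_le_cfDenom hw (le_refl (0 : ℝ))
  have hQ1 := one_le_cfDenom hw zero_le_one
  have hQu : cfDenom w 0 ≤ cfDenom w u := (monotoneOn_cfDenom hw).1 self_mem_Ici hu0 hu0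
  refine (measure_mono hsub).trans ?_
  rw [volume_cylinder_inter_preimage_Icc hw hu0 hu1 le_rfl, volume_cylinder hw,
    ← ENNReal.ofReal_mul (sub_nonneg.mpr hu1), mul_one_div]
  gcongr

end Volume

lemma digit_eq_of_digits_eq {k i : ℕ} {x y : ℝ} (h : digits k x = digits k y) (hi : i < k) :
    digit i x = digit i y :=
  congrFun (List.ofFn_inj.mp h) ⟨i, hi⟩

lemma disjoint_cylinder {w w' : List ℕ} (hlen : w.length = w'.length) (hne : w ≠ w') :
    Disjoint (cylinder w) (cylinder w') :=
  disjoint_left.mpr fun x hx hx' => hne (by rw [← hx.2, ← hx'.2, hlen])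

lemma volume_inter_lt_le_of_cylinder_subset {E : Set ℝ} {k : ℕ} (hE : E ⊆ 𝕀)
    (hcyl : ∀ x ∈ E, cylinder (digits k x) ⊆ E) {u : ℝ} (hu0 : 0 ≤ u) (hu1 : u ≤ 1) :
    volume (E ∩ {x | u < gaussMap^[k] x}) ≤ ENNReal.ofReal (1 - u) * volume E := by
  set W := digits k '' E
  have hW : W.Countable := W.to_countable
  have hWlen : ∀ w ∈ W, w.length = k := by rintro _ ⟨x, -, rfl⟩; exact length_digits k x
  have hWpos : ∀ w ∈ W, ∀ j ∈ w, 0 < j := by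
    rintro _ ⟨x, hx, rfl⟩; exact digits_pos (hE hx) k
  have hEW : E = ⋃ w ∈ W, cylinder w := by
    refine subset_antisymm (fun x hx => mem_biUnion (mem_image_of_mem _ hx) ?_) ?_
    · exact ⟨hE hx, by rw [length_digits]⟩
    · exact iUnion₂_subset fun _ ⟨x, hx, hw⟩ => hw ▸ hcyl x hx
  calc volume (E ∩ {x | u < gaussMap^[k] x})
      = volume (⋃ w ∈ W, cylinder w ∩ {x | u < gaussMap^[k] x}) := by rw [hEW, iUnion₂_inter]
    _ ≤ ∑' w : W, volume (cylinder w ∩ {x | u < gaussMap^[k] x}) :=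
        measure_biUnion_le _ hW _
    _ ≤ ∑' w : W, ENNReal.ofReal (1 - u) * volume (cylinder w) := ENNReal.tsum_le_tsum fun w =>
        hWlen w w.2 ▸ volume_cylinder_inter_lt_le (hWpos w w.2) hu0 hu1
    _ = ENNReal.ofReal (1 - u) * volume E := by
        rw [ENNReal.tsum_mul_left, hEW, measure_biUnion₀ hW
          (fun w hw w' hw' hne =>
            (disjoint_cylinder ((hWlen w hw).trans (hWlen w' hw').symm) hne).aedisjoint)
          (fun w hw => nullMeasurableSet_cylinder (hWpos w hw))]

lemma one_div_lt_iterate_of_digit_lt {x : ℝ} (hx : x ∈ 𝕀) {i m : ℕ} (h : digit i x < m) :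
    1 / (m : ℝ) < gaussMap^[i] x := by
  have hpos := (mapsTo_gaussMap.iterate i hx).1.1
  have hlt : 1 / gaussMap^[i] x < m := (Nat.floor_lt (by positivity)).mp h
  exact (one_div_lt hpos (by linarith [one_div_pos.mpr hpos])).mp hlt

lemma volume_digit_lt_le (m : ℕ → ℕ) (hm : ∀ i, 0 < m i) {N k : ℕ} (hk : N ≤ k) :
    volume {x | x ∈ 𝕀 ∧ ∀ i ∈ Finset.Ico N k, digit i x < m i} ≤
      ENNReal.ofReal (Real.exp (-∑ i ∈ Finset.Ico N k, 1 / (m i : ℝ))) := by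
  induction k, hk using Nat.le_induction with
  | base =>
    simp only [Finset.Ico_self, Finset.sum_empty, neg_zero, Real.exp_zero, ENNReal.ofReal_one]
    calc _ ≤ volume (Ioo (0 : ℝ) 1) := measure_mono fun x hx => hx.1.1
      _ = 1 := by simp
  | succ k hk ih =>
    set E := {x | x ∈ 𝕀 ∧ ∀ i ∈ Finset.Ico N k, digit i x < m i}
    have hcyl : ∀ x ∈ E, cylinder (digits k x) ⊆ E := by
      rintro x ⟨-, hx⟩ y ⟨hy, hyx⟩
      rw [length_digits] at hyx
      refine ⟨hy, fun i hi => ?_⟩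
      rw [digit_eq_of_digits_eq hyx (Finset.mem_Ico.mp hi).2]
      exact hx i hi
    have hmk : (1 : ℝ) ≤ m k := by exact_mod_cast hm k
    have hsub : {x | x ∈ 𝕀 ∧ ∀ i ∈ Finset.Ico N (k + 1), digit i x < m i} ⊆
        E ∩ {x | 1 / (m k : ℝ) < gaussMap^[k] x} := by
      rintro x ⟨hx, hdig⟩
      refine ⟨⟨hx, fun i hi => hdig i (Finset.Ico_subset_Ico_right k.le_succ hi)⟩, ?_⟩
      exact one_div_lt_iterate_of_digit_lt hx (hdig k (Finset.mem_Ico.mpr ⟨hk, k.lt_succ_self⟩))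
    calc _ ≤ volume (E ∩ {x | 1 / (m k : ℝ) < gaussMap^[k] x}) := measure_mono hsub
      _ ≤ ENNReal.ofReal (1 - 1 / m k) * volume E :=
        volume_inter_lt_le_of_cylinder_subset (fun x hx => hx.1) hcyl (by positivity)
          (div_le_one_of_le₀ hmk (Nat.cast_nonneg _))
      _ ≤ ENNReal.ofReal (Real.exp (-(1 / m k))) *
            ENNReal.ofReal (Real.exp (-∑ i ∈ Finset.Ico N k, 1 / (m i : ℝ))) := by
        gcongr
        exact Real.one_sub_le_exp_neg _
      _ = _ := by
        rw [← ENNReal.ofReal_mul (Real.exp_pos _).le, ← Real.exp_add, Finset.sum_Ico_succ_top hk]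
        ring_nf

lemma volume_forall_digit_lt_eq_zero (m : ℕ → ℕ) (hm : ∀ i, 0 < m i)
    (hdiv : ¬ Summable fun i => 1 / (m i : ℝ)) (N : ℕ) :
    volume {x | x ∈ 𝕀 ∧ ∀ i, N ≤ i → digit i x < m i} = 0 := by
  have hsum : Tendsto (fun k => ∑ i ∈ Finset.range k, 1 / (m i : ℝ)) atTop atTop :=
    (not_summable_iff_tendsto_nat_atTop_of_nonneg fun i => by positivity).mp hdiv
  have hIco : Tendsto (fun k => ∑ i ∈ Finset.Ico N k, 1 / (m i : ℝ)) atTop atTop :=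
    (tendsto_atTop_add_const_right _ (-∑ i ∈ Finset.range N, 1 / (m i : ℝ)) hsum).congr' <|
      eventually_atTop.mpr
        ⟨N, fun k hk => by simp only [Finset.sum_Ico_eq_sub _ hk, sub_eq_add_neg]⟩
  have hexp : Tendsto (fun k => ENNReal.ofReal (Real.exp (-∑ i ∈ Finset.Ico N k, 1 / (m i : ℝ))))
      atTop (nhds 0) := by
    simpa using ENNReal.tendsto_ofReal
      (Real.tendsto_exp_atBot.comp (tendsto_neg_atTop_atBot.comp hIco))
  refine le_antisymm (ge_of_tendsto hexp (eventually_atTop.mpr ⟨N, fun k hk => ?_⟩)) zero_le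
  refine (measure_mono fun x hx => ?_).trans (volume_digit_lt_le m hm hk)
  exact ⟨hx.1, fun i hi => hx.2 i (Finset.mem_Ico.mp hi).1⟩

theorem ae_frequently_le_digit (m : ℕ → ℕ) (hm : ∀ i, 0 < m i)
    (hdiv : ¬ Summable fun i => 1 / (m i : ℝ)) :
    ∀ᵐ x, x ∈ 𝕀 → ∃ᶠ i in atTop, m i ≤ digit i x := by
  rw [ae_iff]
  refine measure_mono_null (fun x hx => ?_)
    (measure_iUnion_null (volume_forall_digit_lt_eq_zero m hm hdiv))
  obtain ⟨hx, hfreq⟩ := Classical.not_imp.mp hx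
  obtain ⟨N, hN⟩ := eventually_atTop.mp (not_frequently.mp hfreq)
  exact mem_iUnion.mpr ⟨N, hx, fun i hi => not_le.mp (hN i hi)⟩

end BorelBernstein

theorem borel_bernstein_divergence (b : ℕ → ℝ) (hb : ∀ n, 0 < b n)
    (hsum : ¬ Summable (fun n => 1 / b n)) :
    ∀ᵐ x ∂(volume.restrict (Set.Ico (0 : ℝ) 1)), Irrational x →
      {n : ℕ | b n ≤ (cfDigit n x : ℝ)}.Infinite := by
  have hm : ∀ i, 0 < ⌈b (i + 1)⌉₊ := fun i => Nat.ceil_pos.mpr (hb _)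
  have hdiv : ¬ Summable fun i => 1 / (⌈b (i + 1)⌉₊ : ℝ) :=
    not_summable_one_div_natCeil (fun i => hb _)
      (mt (summable_nat_add_iff (f := fun n => 1 / b n) 1).mp hsum)
  rw [ae_restrict_iff' measurableSet_Ico]
  filter_upwards [BorelBernstein.ae_frequently_le_digit _ hm hdiv] with x hx hIco hirr
  have hfreq := hx ⟨⟨hIco.1.lt_of_ne' hirr.ne_zero, hIco.2⟩, hirr⟩
  refine Nat.frequently_atTop_iff_infinite.mp ((tendsto_add_atTop_nat 1).frequently ?_)
  refine hfreq.mono fun i hi => ?_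
  rw [BorelBernstein.cfDigit_succ]
  exact (Nat.le_ceil _).trans (Nat.cast_le.mpr hi)
end

section
/- Let (c_n) be positive reals and (d_n) positive integers, both tending to infinity. Then d_n < a_n(x) ≤ d_n(1 + 1/c_n) holds for infinitely many n with Lebesgue measure 0 or 1, according as the sum of 1/(c_n d_n) over those n with c_n ≤ d_n is finite or infinite. -/
open MeasureTheory Filter Set

/-!
A digit word `w = [a₁, …, aₖ]` acts by the Möbius map `t ↦ [0; a₁, …, aₖ + t]`, and up to a
countable set the points with first digits `w` and `k`-th Gauss iterate in `(α, β) ⊆ [0, 1]` form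
the image of `(α, β)`, of length `(β - α) / (q_α q_β)` with `q ≤ q_t ≤ 2q`. Hence inside every
cylinder the event "the next digit lies in `S`" has relative measure between `μ(S)/2` and `2μ(S)`,
where `μ(S) = ∑_{k ∈ S} (1/k - 1/(k+1))` is its measure for the first digit. Summing over
cylinders gives `λ(a_{j+1} ∈ S) ≤ 2μ(S)`, so the convergent case is Borel–Cantelli; iterating the
lower bound, the points whose digits avoid `S_j` for `m ≤ j < N` have measure at most
`∏ (1 - μ(S_j)/2) ≤ exp(-∑ μ(S_j)/2)`, which tends to `0` in the divergent case. For the window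
`S = (d, d(1 + 1/c)]` one has `μ(S) ≍ 1/(cd)` when `1 ≤ c ≤ d`, and `S = ∅` when `d < c`.
-/

namespace ContFracDigits

/-- The continuants of a word `[a₁, …, aₖ]`, normalised so that
`[0; a₁, …, aₖ + t] = (p + p' t) / (q + q' t)`. -/
structure Continuants where
  p : ℕ
  p' : ℕ
  q : ℕ
  q' : ℕ

def continuants : List ℕ → Continuants
  | [] => ⟨0, 1, 1, 0⟩
  | a :: w =>
    let c := continuants w
    ⟨c.q, c.q', a * c.q + c.p, a * c.q' + c.p'⟩

@[simp] lemma continuants_nil : continuants [] = ⟨0, 1, 1, 0⟩ := rfl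

@[simp] lemma continuants_cons (a : ℕ) (w : List ℕ) :
    continuants (a :: w) =
      ⟨(continuants w).q, (continuants w).q', a * (continuants w).q + (continuants w).p,
        a * (continuants w).q' + (continuants w).p'⟩ := rfl

def Admissible (w : List ℕ) : Prop := ∀ a ∈ w, 1 ≤ a

lemma Admissible.tail {a : ℕ} {w : List ℕ} (h : Admissible (a :: w)) : Admissible w :=
  fun b hb => h b (List.mem_cons_of_mem a hb)

lemma Admissible.head {a : ℕ} {w : List ℕ} (h : Admissible (a :: w)) : 1 ≤ a :=
  h a List.mem_cons_self

lemma Admissible.append_singleton {w : List ℕ} {a : ℕ} (h : Admissible (w ++ [a])) :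
    Admissible w ∧ 1 ≤ a :=
  ⟨fun b hb => h b (List.mem_append_left _ hb), h a (by simp)⟩

lemma one_le_q {w : List ℕ} (h : Admissible w) : 1 ≤ (continuants w).q := by
  induction w with
  | nil => simp
  | cons a w ih =>
    simp only [continuants_cons]
    nlinarith [ih h.tail, h.head]

lemma q'_le_q {w : List ℕ} (h : Admissible w) : (continuants w).q' ≤ (continuants w).q := by
  suffices (continuants w).q' ≤ (continuants w).q ∧
      (continuants w).p' + (continuants w).q' ≤ (continuants w).p + (continuants w).q from this.1
  induction w with
  | nil => simp
  | cons a w ih =>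
    obtain ⟨h₁, h₂⟩ := ih h.tail
    obtain ⟨b, rfl⟩ : ∃ b, a = b + 1 := ⟨a - 1, by have := h.head; omega⟩
    have : b * (continuants w).q' ≤ b * (continuants w).q := Nat.mul_le_mul_left b h₁
    simp only [continuants_cons, Nat.add_mul, Nat.one_mul]
    omega

lemma continuants_det (w : List ℕ) :
    ((continuants w).p' : ℝ) * (continuants w).q - (continuants w).p * (continuants w).q' =
      (-1) ^ w.length := by
  induction w with
  | nil => simp
  | cons a w ih =>
    simp only [continuants_cons, List.length_cons, pow_succ]
    push_cast
    linear_combination -ih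

noncomputable def mobiusDen (w : List ℕ) (t : ℝ) : ℝ := (continuants w).q + (continuants w).q' * t

/-- `mobius [a₁, …, aₖ] t = [0; a₁, …, aₖ + t]`. -/
noncomputable def mobius (w : List ℕ) (t : ℝ) : ℝ :=
  ((continuants w).p + (continuants w).p' * t) / mobiusDen w t

lemma mobiusDen_pos {w : List ℕ} (h : Admissible w) {t : ℝ} (ht : 0 ≤ t) : 0 < mobiusDen w t := by
  have : (1 : ℝ) ≤ (continuants w).q := by exact_mod_cast one_le_q h
  unfold mobiusDen
  positivity

@[simp] lemma mobius_nil (t : ℝ) : mobius [] t = t := by simp [mobius, mobiusDen]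

lemma mobius_cons {a : ℕ} {w : List ℕ} (h : Admissible (a :: w)) {t : ℝ} (ht : 0 ≤ t) :
    mobius (a :: w) t = 1 / (a + mobius w t) := by
  have hw := mobiusDen_pos h.tail ht
  unfold mobius mobiusDen at *
  simp only [continuants_cons] at *
  push_cast at *
  rw [add_div' _ _ _ hw.ne', one_div_div]
  congr 1
  ring

lemma mobius_append {w : List ℕ} {a : ℕ} (h : Admissible (w ++ [a])) {t : ℝ} (ht : 0 ≤ t) :
    mobius (w ++ [a]) t = mobius w (1 / (a + t)) := by
  induction w with
  | nil => simpa using mobius_cons (w := []) h ht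
  | cons b w ih =>
    obtain ⟨hw, ha⟩ := h.append_singleton
    have h' : Admissible (b :: (w ++ [a])) := h
    rw [List.cons_append, mobius_cons h' ht, ih h'.tail, mobius_cons hw (by positivity)]

lemma mobius_sub_mobius {w : List ℕ} {α β : ℝ} (hα : mobiusDen w α ≠ 0) (hβ : mobiusDen w β ≠ 0) :
    mobius w β - mobius w α = (-1) ^ w.length * (β - α) / (mobiusDen w α * mobiusDen w β) := by
  have hdet := continuants_det w
  unfold mobius mobiusDen at *
  rw [div_sub_div _ _ hβ hα]
  congr 1
  · linear_combination (β - α) * hdet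
  · ring

lemma mobius_mem_Ioo {w : List ℕ} (h : Admissible w) {α β t : ℝ} (hα : 0 ≤ α)
    (ht : t ∈ Ioo α β) :
    mobius w t ∈ Ioo (min (mobius w α) (mobius w β)) (max (mobius w α) (mobius w β)) := by
  obtain ⟨hαt, htβ⟩ := ht
  have hDα := mobiusDen_pos h hα
  have hDt := mobiusDen_pos h (hα.trans hαt.le)
  have hDβ := mobiusDen_pos h (hα.trans (hαt.trans htβ).le)
  have s₁ := mobius_sub_mobius hDα.ne' hDt.ne'
  have s₂ := mobius_sub_mobius hDt.ne' hDβ.ne'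
  have p₁ : 0 < (t - α) / (mobiusDen w α * mobiusDen w t) := by
    apply div_pos <;> nlinarith
  have p₂ : 0 < (β - t) / (mobiusDen w t * mobiusDen w β) := by
    apply div_pos <;> nlinarith
  rcases neg_one_pow_eq_or ℝ w.length with hs | hs <;> rw [hs, mul_div_assoc] at s₁ s₂
  · exact ⟨(min_le_left _ _).trans_lt (by linarith), (le_max_right _ _).trans_lt' (by linarith)⟩
  · exact ⟨(min_le_right _ _).trans_lt (by linarith), (le_max_left _ _).trans_lt' (by linarith)⟩

lemma max_sub_min_mobius {w : List ℕ} (h : Admissible w) {α β : ℝ} (hα : 0 ≤ α) (hαβ : α ≤ β) :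
    max (mobius w α) (mobius w β) - min (mobius w α) (mobius w β) =
      (β - α) / (mobiusDen w α * mobiusDen w β) := by
  have hDα := mobiusDen_pos h hα
  have hDβ := mobiusDen_pos h (hα.trans hαβ)
  rw [max_sub_min_eq_abs, mobius_sub_mobius hDα.ne' hDβ.ne', abs_div, abs_mul, abs_pow, abs_neg,
    abs_one, one_pow, one_mul, abs_of_nonneg (sub_nonneg.2 hαβ), abs_of_pos (by positivity)]

lemma continuousOn_mobius {w : List ℕ} (h : Admissible w) {α β : ℝ} (hα : 0 ≤ α) :
    ContinuousOn (mobius w) (Icc α β) := by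
  refine ContinuousOn.div (by fun_prop) (by unfold mobiusDen; fun_prop) fun t ht => ?_
  exact (mobiusDen_pos h (hα.trans ht.1)).ne'

def unitIrrationals : Set ℝ := {x | Irrational x} ∩ Ioo 0 1

lemma ae_mem_unitIrrationals : ∀ᵐ x : ℝ, x ∈ Ioo 0 1 → x ∈ unitIrrationals := by
  filter_upwards [(countable_range ((↑) : ℚ → ℝ)).ae_notMem volume] with x hx hI
  exact ⟨hx, hI⟩

lemma gaussMap_eq_fract {x : ℝ} (hx : x ≠ 0) : gaussMap x = Int.fract (1 / x) := by
  rw [gaussMap, if_neg hx, Int.fract]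

lemma mapsTo_gaussMap : MapsTo gaussMap unitIrrationals unitIrrationals := by
  rintro x ⟨hx, h0, -⟩
  have hirr : Irrational (gaussMap x) := by
    rw [gaussMap_eq_fract h0.ne', Int.fract, one_div]
    exact hx.inv.sub_intCast _
  refine ⟨hirr, ?_, ?_⟩
  · rw [gaussMap_eq_fract h0.ne'] at hirr ⊢
    exact (Int.fract_nonneg _).lt_of_ne hirr.ne_zero.symm
  · rw [gaussMap_eq_fract h0.ne']
    exact Int.fract_lt_one _

lemma gaussMap_iterate_mem {x : ℝ} (hx : x ∈ unitIrrationals) (n : ℕ) :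
    gaussMap^[n] x ∈ unitIrrationals :=
  mapsTo_gaussMap.iterate n hx

lemma one_le_floor_one_div {t : ℝ} (ht : t ∈ Ioo (0 : ℝ) 1) : 1 ≤ ⌊1 / t⌋₊ :=
  Nat.le_floor (by rw [Nat.cast_one, le_div_iff₀ ht.1]; linarith [ht.2])

lemma floor_one_div_eq_iff {t : ℝ} (ht : t ∈ unitIrrationals) {k : ℕ} (hk : 1 ≤ k) :
    ⌊1 / t⌋₊ = k ↔ t ∈ Ioo (1 / (k + 1 : ℝ)) (1 / k) := by
  obtain ⟨hirr, ht0, -⟩ := ht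
  have hk0 : (0 : ℝ) < k := by exact_mod_cast hk
  have hne : t ≠ 1 / k := fun h => hirr ⟨1 / k, by push_cast [h]; ring⟩
  rw [Nat.floor_eq_iff' (by omega), le_div_iff₀ ht0, div_lt_iff₀ ht0, mem_Ioo,
    div_lt_iff₀ (by positivity), lt_div_iff₀ hk0]
  constructor
  · rintro ⟨h₁, h₂⟩
    refine ⟨by linarith, lt_of_le_of_ne ?_ (fun h => hne ?_)⟩
    · linarith
    · field_simp; linarith
  · rintro ⟨h₁, h₂⟩
    exact ⟨by linarith, by linarith⟩

lemma one_div_add_mem {a : ℕ} (ha : 1 ≤ a) {y : ℝ} (hy : y ∈ unitIrrationals) :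
    1 / (a + y) ∈ unitIrrationals := by
  obtain ⟨hirr, hy0, hy1⟩ := hy
  have : (1 : ℝ) ≤ a := by exact_mod_cast ha
  refine ⟨by rw [one_div]; exact (hirr.natCast_add a).inv, by positivity, ?_⟩
  rw [div_lt_one (by positivity)]
  linarith

lemma floor_one_div_one_div_add {a : ℕ} {y : ℝ} (hy : y ∈ unitIrrationals) :
    ⌊1 / (1 / (a + y))⌋₊ = a := by
  rw [one_div_one_div, add_comm, Nat.floor_add_natCast hy.2.1.le, Nat.floor_eq_zero.2 hy.2.2,
    zero_add]

lemma gaussMap_one_div_add {a : ℕ} (ha : 1 ≤ a) {y : ℝ} (hy : y ∈ unitIrrationals) :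
    gaussMap (1 / (a + y)) = y := by
  rw [gaussMap_eq_fract (one_div_add_mem ha hy).1.ne_zero, one_div_one_div, Int.fract_natCast_add,
    Int.fract_eq_self]
  exact ⟨hy.2.1.le, hy.2.2⟩

lemma eq_one_div_floor_add_gaussMap {t : ℝ} (ht : t ∈ unitIrrationals) :
    t = 1 / (⌊1 / t⌋₊ + gaussMap t) := by
  have h0 : (0 : ℝ) ≤ 1 / t := by simpa using ht.2.1.le
  rw [gaussMap_eq_fract ht.2.1.ne', Int.fract, ← Int.natCast_floor_eq_floor h0, Int.cast_natCast,
    add_sub_cancel, one_div_one_div]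

noncomputable def digitWord (n : ℕ) (x : ℝ) : List ℕ :=
  (List.range n).map fun k => ⌊1 / gaussMap^[k] x⌋₊

@[simp] lemma length_digitWord (n : ℕ) (x : ℝ) : (digitWord n x).length = n := by
  simp [digitWord]

lemma digitWord_succ (n : ℕ) (x : ℝ) :
    digitWord (n + 1) x = digitWord n x ++ [⌊1 / gaussMap^[n] x⌋₊] := by
  simp [digitWord, List.range_succ]

lemma digitWord_succ' (n : ℕ) (x : ℝ) :
    digitWord (n + 1) x = ⌊1 / x⌋₊ :: digitWord n (gaussMap x) := by
  simp [digitWord, List.range_succ_eq_map]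

lemma getD_digitWord {x : ℝ} {i n : ℕ} (h : i < n) :
    (digitWord n x).getD i 0 = ⌊1 / gaussMap^[i] x⌋₊ := by
  simp [digitWord, h]

lemma admissible_digitWord {x : ℝ} (hx : x ∈ unitIrrationals) (n : ℕ) :
    Admissible (digitWord n x) := by
  simp only [Admissible, digitWord, List.mem_map, List.mem_range]
  rintro _ ⟨k, -, rfl⟩
  exact one_le_floor_one_div (gaussMap_iterate_mem hx k).2

lemma eq_mobius_digitWord {x : ℝ} (hx : x ∈ unitIrrationals) (n : ℕ) :
    x = mobius (digitWord n x) (gaussMap^[n] x) := by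
  induction n with
  | zero => simp [digitWord]
  | succ n ih =>
    have h := admissible_digitWord hx (n + 1)
    rw [digitWord_succ] at h ⊢
    rw [mobius_append h (gaussMap_iterate_mem hx (n + 1)).2.1.le, Function.iterate_succ_apply',
      ← eq_one_div_floor_add_gaussMap (gaussMap_iterate_mem hx n)]
    exact ih

lemma digits_mobius {w : List ℕ} (hw : Admissible w) {t : ℝ} (ht : t ∈ unitIrrationals) :
    mobius w t ∈ unitIrrationals ∧ gaussMap^[w.length] (mobius w t) = t ∧
      digitWord w.length (mobius w t) = w := by
  induction w with
  | nil => simpa [digitWord] using ht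
  | cons a w ih =>
    obtain ⟨hy, hTy, hwy⟩ := ih hw.tail
    rw [mobius_cons hw ht.2.1.le, List.length_cons]
    refine ⟨one_div_add_mem hw.head hy, ?_, ?_⟩
    · rw [Function.iterate_succ_apply, gaussMap_one_div_add hw.head hy, hTy]
    · rw [digitWord_succ', gaussMap_one_div_add hw.head hy, hwy, floor_one_div_one_div_add hy]

/-- Up to a countable set, the image of `(α, β)` under `mobius w`. -/
def cylinder (w : List ℕ) (α β : ℝ) : Set ℝ :=
  {x ∈ unitIrrationals | digitWord w.length x = w ∧ gaussMap^[w.length] x ∈ Ioo α β}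

lemma mem_cylinder_zero_one {w : List ℕ} {x : ℝ} :
    x ∈ cylinder w 0 1 ↔ x ∈ unitIrrationals ∧ digitWord w.length x = w :=
  ⟨fun h => ⟨h.1, h.2.1⟩, fun h => ⟨h.1, h.2, (gaussMap_iterate_mem h.1 _).2⟩⟩

lemma cylinder_subset_Ioo {w : List ℕ} (hw : Admissible w) {α β : ℝ} (hα : 0 ≤ α) :
    cylinder w α β ⊆ Ioo (min (mobius w α) (mobius w β)) (max (mobius w α) (mobius w β)) := by
  rintro x ⟨hx, hxw, hxT⟩
  rw [eq_mobius_digitWord hx w.length, hxw]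
  exact mobius_mem_Ioo hw hα hxT

lemma Ioo_diff_subset_cylinder {w : List ℕ} (hw : Admissible w) {α β : ℝ} (hα : 0 ≤ α)
    (hαβ : α ≤ β) (hβ : β ≤ 1) :
    Ioo (min (mobius w α) (mobius w β)) (max (mobius w α) (mobius w β)) \
      mobius w '' range ((↑) : ℚ → ℝ) ⊆ cylinder w α β := by
  rintro x ⟨hxI, hxQ⟩
  have himage : Ioo (min (mobius w α) (mobius w β)) (max (mobius w α) (mobius w β)) ⊆
      mobius w '' Ioo α β := by
    rcases le_total (mobius w α) (mobius w β) with h | h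
    · rw [min_eq_left h, max_eq_right h]
      exact intermediate_value_Ioo hαβ (continuousOn_mobius hw hα)
    · rw [min_eq_right h, max_eq_left h]
      exact intermediate_value_Ioo' hαβ (continuousOn_mobius hw hα)
  obtain ⟨t, htI, rfl⟩ := himage hxI
  have ht : t ∈ unitIrrationals :=
    ⟨fun hrat => hxQ ⟨t, hrat, rfl⟩, hα.trans_lt htI.1, htI.2.trans_le hβ⟩
  obtain ⟨hx, hTx, hwx⟩ := digits_mobius hw ht
  exact ⟨hx, hwx, by rw [hTx]; exact htI⟩

lemma measurableSet_of_subset_of_diff_countable {α : Type*} [MeasurableSpace α]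
    [MeasurableSingletonClass α] {s t Q : Set α} (hQ : Q.Countable) (ht : MeasurableSet t)
    (hst : s ⊆ t) (hts : t \ Q ⊆ s) : MeasurableSet s := by
  have : s = (t \ Q) ∪ (s ∩ Q) := by
    ext x
    by_cases hx : x ∈ Q
    · simp [hx]
    · exact ⟨fun h => Or.inl ⟨hst h, hx⟩, fun h => h.elim (fun h => hts h) (fun h => h.1)⟩
  rw [this]
  exact (ht.diff hQ.measurableSet).union (hQ.mono inter_subset_right).measurableSet

lemma measure_eq_of_subset_of_diff_countable {α : Type*} [MeasurableSpace α] {μ : Measure α}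
    [NullSingletonClass μ] {s t Q : Set α} (hQ : Q.Countable) (hst : s ⊆ t) (hts : t \ Q ⊆ s) :
    μ s = μ t :=
  le_antisymm (measure_mono hst)
    ((measure_sdiff_null (hQ.measure_zero μ)).symm.le.trans (measure_mono hts))

lemma measurableSet_cylinder {w : List ℕ} (hw : Admissible w) {α β : ℝ} (hα : 0 ≤ α)
    (hαβ : α ≤ β) (hβ : β ≤ 1) : MeasurableSet (cylinder w α β) :=
  measurableSet_of_subset_of_diff_countable ((countable_range _).image _) measurableSet_Ioo
    (cylinder_subset_Ioo hw hα) (Ioo_diff_subset_cylinder hw hα hαβ hβ)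

lemma volume_cylinder {w : List ℕ} (hw : Admissible w) {α β : ℝ} (hα : 0 ≤ α) (hαβ : α ≤ β)
    (hβ : β ≤ 1) :
    volume (cylinder w α β) = ENNReal.ofReal ((β - α) / (mobiusDen w α * mobiusDen w β)) := by
  rw [measure_eq_of_subset_of_diff_countable ((countable_range _).image _)
    (cylinder_subset_Ioo hw hα) (Ioo_diff_subset_cylinder hw hα hαβ hβ), Real.volume_Ioo,
    max_sub_min_mobius hw hα hαβ]

/-- Bounded distortion, from `q ≤ q + q' t ≤ 2q` on `[0, 1]`. -/
lemma sub_div_mobiusDen_mem_Icc {w : List ℕ} (hw : Admissible w) {α β : ℝ} (hα : 0 ≤ α)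
    (hαβ : α ≤ β) (hβ : β ≤ 1) :
    (β - α) / (mobiusDen w α * mobiusDen w β) ∈
      Icc ((β - α) / 2 * (1 / (mobiusDen w 0 * mobiusDen w 1)))
        (2 * (β - α) * (1 / (mobiusDen w 0 * mobiusDen w 1))) := by
  have hq : (1 : ℝ) ≤ (continuants w).q := by exact_mod_cast one_le_q hw
  have hq' : ((continuants w).q' : ℝ) ≤ (continuants w).q := by exact_mod_cast q'_le_q hw
  have hq'0 : (0 : ℝ) ≤ (continuants w).q' := Nat.cast_nonneg _
  have hDα := mobiusDen_pos hw hα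
  have hDβ := mobiusDen_pos hw (hα.trans hαβ)
  have hD : ∀ t, 0 ≤ t → t ≤ 1 →
      (continuants w).q ≤ mobiusDen w t ∧ mobiusDen w t ≤ (continuants w).q + (continuants w).q' :=
    fun t h0 h1 => ⟨by unfold mobiusDen; nlinarith, by unfold mobiusDen; nlinarith⟩
  obtain ⟨hα₁, hα₂⟩ := hD α hα (hαβ.trans hβ)
  obtain ⟨hβ₁, hβ₂⟩ := hD β (hα.trans hαβ) hβ
  simp only [mobiusDen, mul_zero, add_zero, mul_one] at hα₁ hα₂ hβ₁ hβ₂ hDα hDβ ⊢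
  constructor
  · rw [div_mul_div_comm, mul_one]
    exact div_le_div_of_nonneg_left (by linarith) (by positivity) (by nlinarith)
  · rw [div_eq_mul_one_div (β - α), mul_comm 2, mul_assoc]
    refine mul_le_mul_of_nonneg_left ?_ (by linarith)
    rw [mul_one_div, div_le_div_iff₀ (by positivity) (by positivity)]
    nlinarith [mul_le_mul hα₁ hβ₁ (by linarith) (by linarith)]

lemma volume_cylinder_zero_one {w : List ℕ} (hw : Admissible w) :
    volume (cylinder w 0 1) = ENNReal.ofReal (1 / (mobiusDen w 0 * mobiusDen w 1)) := by
  rw [volume_cylinder hw le_rfl zero_le_one le_rfl, sub_zero]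

lemma volume_cylinder_mem_Icc {w : List ℕ} (hw : Admissible w) {α β : ℝ} (hα : 0 ≤ α)
    (hαβ : α ≤ β) (hβ : β ≤ 1) :
    volume (cylinder w α β) ∈
      Icc (ENNReal.ofReal ((β - α) / 2) * volume (cylinder w 0 1))
        (ENNReal.ofReal (2 * (β - α)) * volume (cylinder w 0 1)) := by
  obtain ⟨hlow, hup⟩ := sub_div_mobiusDen_mem_Icc hw hα hαβ hβ
  have hpos : 0 ≤ 1 / (mobiusDen w 0 * mobiusDen w 1) :=
    (one_div_pos.2 (mul_pos (mobiusDen_pos hw le_rfl) (mobiusDen_pos hw zero_le_one))).le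
  rw [volume_cylinder hw hα hαβ hβ, volume_cylinder_zero_one hw, ← ENNReal.ofReal_mul' hpos,
    ← ENNReal.ofReal_mul' hpos]
  exact ⟨ENNReal.ofReal_le_ofReal hlow, ENNReal.ofReal_le_ofReal hup⟩

/-- For `S ⊆ {1, 2, …}` this is `λ {t | ⌊1/t⌋ ∈ S}`, the digit `k` occupying `(1/(k+1), 1/k)`. -/
noncomputable def digitMass (S : Finset ℕ) : ℝ := ∑ k ∈ S, (1 / (k : ℝ) - 1 / (k + 1))

lemma digitInterval_bounds {k : ℕ} (hk : 1 ≤ k) :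
    0 ≤ 1 / (k + 1 : ℝ) ∧ 1 / (k + 1 : ℝ) ≤ 1 / k ∧ 1 / (k : ℝ) ≤ 1 := by
  have : (1 : ℝ) ≤ k := by exact_mod_cast hk
  refine ⟨by positivity, one_div_le_one_div_of_le (by positivity) (by linarith), ?_⟩
  rw [div_le_one (by positivity)]
  exact this

lemma digitMass_nonneg {S : Finset ℕ} (hS : ∀ k ∈ S, 1 ≤ k) : 0 ≤ digitMass S :=
  Finset.sum_nonneg fun k hk => sub_nonneg.2 (digitInterval_bounds (hS k hk)).2.1

def digitCylinder (w : List ℕ) (S : Finset ℕ) : Set ℝ :=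
  ⋃ k ∈ S, cylinder w (1 / (k + 1)) (1 / k)

lemma mem_digitCylinder {w : List ℕ} {S : Finset ℕ} (hS : ∀ k ∈ S, 1 ≤ k) {x : ℝ} :
    x ∈ digitCylinder w S ↔ x ∈ cylinder w 0 1 ∧ ⌊1 / gaussMap^[w.length] x⌋₊ ∈ S := by
  simp only [digitCylinder, mem_iUnion₂, mem_cylinder_zero_one, exists_prop]
  constructor
  · rintro ⟨k, hk, hx, hxw, hxT⟩
    rw [(floor_one_div_eq_iff (gaussMap_iterate_mem hx _) (hS k hk)).2 hxT]
    exact ⟨⟨hx, hxw⟩, hk⟩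
  · rintro ⟨⟨hx, hxw⟩, hS'⟩
    exact ⟨_, hS', hx, hxw,
      (floor_one_div_eq_iff (gaussMap_iterate_mem hx _) (hS _ hS')).1 rfl⟩

lemma digitCylinder_subset {w : List ℕ} {S : Finset ℕ} (hS : ∀ k ∈ S, 1 ≤ k) :
    digitCylinder w S ⊆ cylinder w 0 1 :=
  fun _ hx => ((mem_digitCylinder hS).1 hx).1

lemma measurableSet_digitCylinder {w : List ℕ} (hw : Admissible w) {S : Finset ℕ}
    (hS : ∀ k ∈ S, 1 ≤ k) : MeasurableSet (digitCylinder w S) :=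
  Finset.measurableSet_biUnion _ fun k hk =>
    have h := digitInterval_bounds (hS k hk)
    measurableSet_cylinder hw h.1 h.2.1 h.2.2

lemma volume_digitCylinder {w : List ℕ} (hw : Admissible w) {S : Finset ℕ}
    (hS : ∀ k ∈ S, 1 ≤ k) :
    volume (digitCylinder w S) = ∑ k ∈ S, volume (cylinder w (1 / (k + 1)) (1 / k)) := by
  refine measure_biUnion_finset (fun k hk k' hk' hne => disjoint_left.2 ?_) fun k hk =>
    have h := digitInterval_bounds (hS k hk)
    measurableSet_cylinder hw h.1 h.2.1 h.2.2
  rintro x ⟨hx, -, hxk⟩ ⟨-, -, hxk'⟩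
  have hT := gaussMap_iterate_mem hx w.length
  exact hne (((floor_one_div_eq_iff hT (hS k hk)).2 hxk).symm.trans
    ((floor_one_div_eq_iff hT (hS k' hk')).2 hxk'))

lemma volume_digitCylinder_mem_Icc {w : List ℕ} (hw : Admissible w) {S : Finset ℕ}
    (hS : ∀ k ∈ S, 1 ≤ k) :
    volume (digitCylinder w S) ∈
      Icc (ENNReal.ofReal (digitMass S / 2) * volume (cylinder w 0 1))
        (ENNReal.ofReal (2 * digitMass S) * volume (cylinder w 0 1)) := by
  have hgap : ∀ k ∈ S, 0 ≤ 1 / (k : ℝ) - 1 / (k + 1) :=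
    fun k hk => sub_nonneg.2 (digitInterval_bounds (hS k hk)).2.1
  have hbounds := fun k (hk : k ∈ S) =>
    have h := digitInterval_bounds (hS k hk)
    volume_cylinder_mem_Icc hw h.1 h.2.1 h.2.2
  rw [volume_digitCylinder hw hS, digitMass, Finset.sum_div, Finset.mul_sum,
    ENNReal.ofReal_sum_of_nonneg fun k hk => div_nonneg (hgap k hk) zero_le_two,
    ENNReal.ofReal_sum_of_nonneg fun k hk => mul_nonneg zero_le_two (hgap k hk),
    Finset.sum_mul, Finset.sum_mul]
  exact ⟨Finset.sum_le_sum fun k hk => (hbounds k hk).1,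
    Finset.sum_le_sum fun k hk => (hbounds k hk).2⟩

lemma volume_cylinder_diff_digitCylinder_le {w : List ℕ} (hw : Admissible w) {S : Finset ℕ}
    (hS : ∀ k ∈ S, 1 ≤ k) :
    volume (cylinder w 0 1 \ digitCylinder w S) ≤
      ENNReal.ofReal (1 - digitMass S / 2) * volume (cylinder w 0 1) := by
  have hL : 0 ≤ 1 / (mobiusDen w 0 * mobiusDen w 1) :=
    (one_div_pos.2 (mul_pos (mobiusDen_pos hw le_rfl) (mobiusDen_pos hw zero_le_one))).le
  have hm : 0 ≤ digitMass S / 2 := div_nonneg (digitMass_nonneg hS) zero_le_two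
  rw [measure_sdiff (digitCylinder_subset hS) (measurableSet_digitCylinder hw hS).nullMeasurableSet
    (measure_ne_top_of_subset (digitCylinder_subset hS) (by
      rw [volume_cylinder_zero_one hw]; exact ENNReal.ofReal_ne_top))]
  calc volume (cylinder w 0 1) - volume (digitCylinder w S)
      ≤ volume (cylinder w 0 1) - ENNReal.ofReal (digitMass S / 2) * volume (cylinder w 0 1) :=
        tsub_le_tsub_left (volume_digitCylinder_mem_Icc hw hS).1 _
    _ = ENNReal.ofReal (1 - digitMass S / 2) * volume (cylinder w 0 1) := by
        rw [volume_cylinder_zero_one hw, ← ENNReal.ofReal_mul' hL, ← ENNReal.ofReal_mul' hL,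
          ← ENNReal.ofReal_sub _ (mul_nonneg hm hL), sub_mul, one_mul]

def words (n : ℕ) : Set (List ℕ) := {w | w.length = n ∧ Admissible w}

lemma pairwiseDisjoint_cylinder (n : ℕ) : (words n).PairwiseDisjoint (cylinder · 0 1) := by
  intro w hw w' hw' hne
  refine disjoint_left.2 fun x hx hx' => hne ?_
  rw [← (mem_cylinder_zero_one.1 hx).2, ← (mem_cylinder_zero_one.1 hx').2, hw.1, hw'.1]

lemma volume_biUnion_le_mul {N : ℕ} {W : Set (List ℕ)} (hW : W ⊆ words N)
    {f : List ℕ → Set ℝ} (hf : ∀ w, f w ⊆ cylinder w 0 1) (hfm : ∀ w ∈ W, MeasurableSet (f w))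
    {r : ENNReal} (hr : ∀ w ∈ W, volume (f w) ≤ r * volume (cylinder w 0 1)) :
    volume (⋃ w ∈ W, f w) ≤ r * volume (⋃ w ∈ W, cylinder w 0 1) := by
  have hdisj := (pairwiseDisjoint_cylinder N).subset hW
  rw [measure_biUnion W.to_countable (hdisj.mono fun w => hf w) hfm,
    measure_biUnion W.to_countable hdisj fun w hw =>
      measurableSet_cylinder (hW hw).2 le_rfl zero_le_one le_rfl, ← ENNReal.tsum_mul_left]
  exact ENNReal.tsum_le_tsum fun w => hr w w.2

def digitSet (j : ℕ) (S : Finset ℕ) : Set ℝ :=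
  {x ∈ unitIrrationals | ⌊1 / gaussMap^[j] x⌋₊ ∈ S}

lemma biUnion_cylinder_inter_digitSet {N : ℕ} {W : Set (List ℕ)} (hW : W ⊆ words N)
    {S : Finset ℕ} (hS : ∀ k ∈ S, 1 ≤ k) :
    (⋃ w ∈ W, cylinder w 0 1) ∩ digitSet N S = ⋃ w ∈ W, digitCylinder w S := by
  simp only [iUnion₂_inter]
  refine iUnion₂_congr fun w hw => ?_
  ext x
  rw [mem_digitCylinder hS, (hW hw).1]
  exact ⟨fun h => ⟨h.1, h.2.2⟩, fun h => ⟨h.1, (mem_cylinder_zero_one.1 h.1).1, h.2⟩⟩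

lemma biUnion_cylinder_diff_digitSet {N : ℕ} {W : Set (List ℕ)} (hW : W ⊆ words N)
    {S : Finset ℕ} (hS : ∀ k ∈ S, 1 ≤ k) :
    (⋃ w ∈ W, cylinder w 0 1) \ digitSet N S = ⋃ w ∈ W, (cylinder w 0 1 \ digitCylinder w S) := by
  simp only [iUnion_sdiff]
  refine iUnion₂_congr fun w hw => ?_
  ext x
  rw [Set.mem_sdiff, Set.mem_sdiff, mem_digitCylinder hS, (hW hw).1]
  exact ⟨fun h => ⟨h.1, fun h' => h.2 ⟨h.1.1, h'.2⟩⟩, fun h => ⟨h.1, fun h' => h.2 ⟨h.1, h'.2⟩⟩⟩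

lemma volume_inter_digitSet_le {N : ℕ} {W : Set (List ℕ)} (hW : W ⊆ words N) {S : Finset ℕ}
    (hS : ∀ k ∈ S, 1 ≤ k) :
    volume ((⋃ w ∈ W, cylinder w 0 1) ∩ digitSet N S) ≤
      ENNReal.ofReal (2 * digitMass S) * volume (⋃ w ∈ W, cylinder w 0 1) := by
  rw [biUnion_cylinder_inter_digitSet hW hS]
  exact volume_biUnion_le_mul hW (fun _ => digitCylinder_subset hS)
    (fun w hw => measurableSet_digitCylinder (hW hw).2 hS)
    (fun w hw => (volume_digitCylinder_mem_Icc (hW hw).2 hS).2)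

lemma volume_diff_digitSet_le {N : ℕ} {W : Set (List ℕ)} (hW : W ⊆ words N) {S : Finset ℕ}
    (hS : ∀ k ∈ S, 1 ≤ k) :
    volume ((⋃ w ∈ W, cylinder w 0 1) \ digitSet N S) ≤
      ENNReal.ofReal (1 - digitMass S / 2) * volume (⋃ w ∈ W, cylinder w 0 1) := by
  rw [biUnion_cylinder_diff_digitSet hW hS]
  exact volume_biUnion_le_mul hW (fun _ => sdiff_subset)
    (fun w hw => (measurableSet_cylinder (hW hw).2 le_rfl zero_le_one le_rfl).diff
      (measurableSet_digitCylinder (hW hw).2 hS))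
    (fun w hw => volume_cylinder_diff_digitCylinder_le (hW hw).2 hS)

lemma biUnion_digitWord_image_cylinder {N : ℕ} {A : Set ℝ} (hA : A ⊆ unitIrrationals)
    (hsat : ∀ x ∈ A, ∀ y ∈ unitIrrationals, digitWord N y = digitWord N x → y ∈ A) :
    ⋃ w ∈ digitWord N '' A, cylinder w 0 1 = A := by
  ext y
  simp only [mem_iUnion₂, mem_image, mem_cylinder_zero_one, exists_prop]
  constructor
  · rintro ⟨_, ⟨x, hx, rfl⟩, hy, hyx⟩
    exact hsat x hx y hy (by simpa using hyx)
  · exact fun hy => ⟨_, ⟨y, hy, rfl⟩, hA hy, by simp⟩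

lemma digitWord_image_subset_words {N : ℕ} {A : Set ℝ} (hA : A ⊆ unitIrrationals) :
    digitWord N '' A ⊆ words N := by
  rintro _ ⟨x, hx, rfl⟩
  exact ⟨length_digitWord N x, admissible_digitWord (hA hx) N⟩

lemma volume_unitIrrationals_le_one : volume unitIrrationals ≤ 1 := by
  calc volume unitIrrationals ≤ volume (Ioo (0 : ℝ) 1) := measure_mono inter_subset_right
    _ = 1 := by simp

lemma volume_digitSet_le (j : ℕ) {S : Finset ℕ} (hS : ∀ k ∈ S, 1 ≤ k) :
    volume (digitSet j S) ≤ ENNReal.ofReal (2 * digitMass S) := by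
  have hU : ⋃ w ∈ digitWord j '' unitIrrationals, cylinder w 0 1 = unitIrrationals :=
    biUnion_digitWord_image_cylinder subset_rfl fun _ _ _ hy _ => hy
  have h := volume_inter_digitSet_le (digitWord_image_subset_words subset_rfl) hS (N := j)
  rw [hU, inter_eq_right.2 fun x hx => hx.1] at h
  exact h.trans (mul_le_of_le_one_right' volume_unitIrrationals_le_one)

def survivors (S : ℕ → Finset ℕ) (m N : ℕ) : Set ℝ :=
  {x ∈ unitIrrationals | ∀ j ∈ Finset.Ico m N, ⌊1 / gaussMap^[j] x⌋₊ ∉ S j}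

lemma survivors_succ (S : ℕ → Finset ℕ) {m N : ℕ} (hmN : m ≤ N) :
    survivors S m (N + 1) = survivors S m N \ digitSet N (S N) := by
  ext x
  simp only [survivors, digitSet, Set.mem_sdiff, Set.mem_ofPred_eq, Finset.mem_Ico]
  constructor
  · rintro ⟨hx, h⟩
    exact ⟨⟨hx, fun j hj => h j ⟨hj.1, by omega⟩⟩, fun h' => h N ⟨hmN, by omega⟩ h'.2⟩
  · rintro ⟨⟨hx, h⟩, hN⟩
    refine ⟨hx, fun j hj => ?_⟩
    rcases (Nat.lt_succ_iff_lt_or_eq.1 hj.2) with hjN | rfl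
    · exact h j ⟨hj.1, hjN⟩
    · exact fun h' => hN ⟨hx, h'⟩

lemma biUnion_digitWord_image_survivors (S : ℕ → Finset ℕ) (m N : ℕ) :
    ⋃ w ∈ digitWord N '' survivors S m N, cylinder w 0 1 = survivors S m N := by
  refine biUnion_digitWord_image_cylinder (fun x hx => hx.1) fun x hx y hy hyx => ⟨hy, ?_⟩
  intro j hj
  have hjN := (Finset.mem_Ico.1 hj).2
  rw [← getD_digitWord hjN, hyx, getD_digitWord hjN]
  exact hx.2 j hj

lemma volume_survivors_le {S : ℕ → Finset ℕ} (hS : ∀ j, ∀ k ∈ S j, 1 ≤ k) (m N : ℕ) :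
    volume (survivors S m N) ≤ ∏ j ∈ Finset.Ico m N, ENNReal.ofReal (1 - digitMass (S j) / 2) := by
  induction N with
  | zero =>
    rw [Finset.Ico_eq_empty (by omega), Finset.prod_empty]
    exact (measure_mono fun x hx => hx.1).trans volume_unitIrrationals_le_one
  | succ N ih =>
    by_cases hmN : m ≤ N
    · have hW := digitWord_image_subset_words (N := N) fun x (hx : x ∈ survivors S m N) => hx.1
      rw [survivors_succ S hmN, Finset.prod_Ico_succ_top hmN, mul_comm]
      calc volume (survivors S m N \ digitSet N (S N))
          = volume ((⋃ w ∈ digitWord N '' survivors S m N, cylinder w 0 1) \ digitSet N (S N)) := by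
            rw [biUnion_digitWord_image_survivors]
        _ ≤ ENNReal.ofReal (1 - digitMass (S N) / 2) *
              volume (⋃ w ∈ digitWord N '' survivors S m N, cylinder w 0 1) :=
            volume_diff_digitSet_le hW (hS N)
        _ ≤ _ := by
            rw [biUnion_digitWord_image_survivors]
            gcongr
    · rw [Finset.Ico_eq_empty (by omega), Finset.prod_empty]
      exact (measure_mono fun x hx => hx.1).trans volume_unitIrrationals_le_one

lemma tendsto_sum_Ico_atTop {g : ℕ → ℝ} (hg : ∀ j, 0 ≤ g j) (hdiv : ¬ Summable g) (m : ℕ) :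
    Tendsto (fun N => ∑ j ∈ Finset.Ico m N, g j) atTop atTop := by
  refine (tendsto_atTop_add_const_right _ (-∑ j ∈ Finset.range m, g j)
    ((not_summable_iff_tendsto_nat_atTop_of_nonneg hg).1 hdiv)).congr' ?_
  filter_upwards [eventually_ge_atTop m] with N hN
  rw [Finset.sum_Ico_eq_sub _ hN, sub_eq_add_neg]

lemma volume_iInter_survivors_eq_zero {S : ℕ → Finset ℕ} (hS : ∀ j, ∀ k ∈ S j, 1 ≤ k)
    (hdiv : ¬ Summable fun j => digitMass (S j)) (m : ℕ) :
    volume (⋂ N, survivors S m N) = 0 := by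
  set g := fun j => digitMass (S j) / 2
  have htend : Tendsto (fun N => ∑ j ∈ Finset.Ico m N, g j) atTop atTop :=
    tendsto_sum_Ico_atTop (fun j => div_nonneg (digitMass_nonneg (hS j)) zero_le_two)
      (fun hg => hdiv ((hg.mul_left 2).congr fun j => mul_div_cancel₀ _ two_ne_zero)) m
  have hbound : ∀ N, volume (⋂ N, survivors S m N) ≤
      ENNReal.ofReal (Real.exp (-∑ j ∈ Finset.Ico m N, g j)) := by
    intro N
    calc volume (⋂ N, survivors S m N)
        ≤ volume (survivors S m N) := measure_mono (iInter_subset _ N)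
      _ ≤ ∏ j ∈ Finset.Ico m N, ENNReal.ofReal (1 - g j) := volume_survivors_le hS m N
      _ ≤ ∏ j ∈ Finset.Ico m N, ENNReal.ofReal (Real.exp (-g j)) :=
        Finset.prod_le_prod' fun j _ =>
          ENNReal.ofReal_le_ofReal (by linarith [Real.add_one_le_exp (-g j)])
      _ = _ := by
        rw [← ENNReal.ofReal_prod_of_nonneg fun j _ => (Real.exp_pos _).le, ← Real.exp_sum,
          Finset.sum_neg_distrib]
  have hlim : Tendsto (fun N => ENNReal.ofReal (Real.exp (-∑ j ∈ Finset.Ico m N, g j)))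
      atTop (nhds 0) := by
    simpa using ENNReal.tendsto_ofReal
      (Real.tendsto_exp_atBot.comp (tendsto_neg_atTop_atBot.comp htend))
  exact le_antisymm (ge_of_tendsto' hlim hbound) zero_le

theorem ae_eventually_floor_notMem {S : ℕ → Finset ℕ} (hS : ∀ j, ∀ k ∈ S j, 1 ≤ k)
    (hsum : Summable fun j => digitMass (S j)) :
    ∀ᵐ x, x ∈ Ioo 0 1 → ∀ᶠ j in atTop, ⌊1 / gaussMap^[j] x⌋₊ ∉ S j := by
  have hfin : ∑' j, volume (digitSet j (S j)) ≠ ⊤ := by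
    refine ne_top_of_le_ne_top (ENNReal.ofReal_ne_top (r := ∑' j, 2 * digitMass (S j))) ?_
    rw [ENNReal.ofReal_tsum_of_nonneg (fun j => mul_nonneg zero_le_two (digitMass_nonneg (hS j)))
      (hsum.mul_left 2)]
    exact ENNReal.tsum_le_tsum fun j => volume_digitSet_le j (hS j)
  filter_upwards [ae_eventually_notMem hfin, ae_mem_unitIrrationals] with x hx hirr hI
  exact hx.mono fun j hj hmem => hj ⟨hirr hI, hmem⟩

theorem ae_frequently_floor_mem {S : ℕ → Finset ℕ} (hS : ∀ j, ∀ k ∈ S j, 1 ≤ k)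
    (hdiv : ¬ Summable fun j => digitMass (S j)) :
    ∀ᵐ x, x ∈ Ioo 0 1 → ∃ᶠ j in atTop, ⌊1 / gaussMap^[j] x⌋₊ ∈ S j := by
  have hnull : ∀ᵐ x, x ∉ ⋃ m, ⋂ N, survivors S m N :=
    measure_eq_zero_iff_ae_notMem.1
      (measure_iUnion_null (volume_iInter_survivors_eq_zero hS hdiv))
  filter_upwards [hnull, ae_mem_unitIrrationals] with x hx hirr hI
  by_contra h
  obtain ⟨m, hm⟩ := eventually_atTop.1 (not_frequently.1 h)
  exact hx (mem_iUnion.2 ⟨m, mem_iInter.2 fun N =>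
    ⟨hirr hI, fun j hj => hm j (Finset.mem_Ico.1 hj).1⟩⟩)

lemma digitMass_Ioc {D M : ℕ} (h : D ≤ M) :
    digitMass (Finset.Ioc D M) = 1 / (D + 1 : ℝ) - 1 / (M + 1) := by
  induction M, h using Nat.le_induction with
  | base => simp [digitMass]
  | succ M hDM ih =>
    rw [digitMass, Finset.sum_Ioc_succ_top hDM, ← digitMass, ih]
    push_cast
    ring

noncomputable def window (D : ℕ) (C : ℝ) : Finset ℕ := Finset.Ioc D ⌊D * (1 + 1 / C)⌋₊

lemma one_le_of_mem_window {D k : ℕ} {C : ℝ} (hk : k ∈ window D C) : 1 ≤ k :=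
  Nat.one_le_of_lt (Finset.mem_Ioc.1 hk).1

lemma mem_window_iff {D k : ℕ} {C : ℝ} : k ∈ window D C ↔ D < k ∧ (k : ℝ) ≤ D * (1 + 1 / C) := by
  rw [window, Finset.mem_Ioc]
  rcases le_or_gt 0 (D * (1 + 1 / C) : ℝ) with h | h
  · rw [Nat.le_floor_iff h]
  · rw [Nat.floor_of_nonpos h.le]
    constructor
    · rintro ⟨h₁, h₂⟩; omega
    · rintro ⟨-, h₂⟩; linarith [(Nat.cast_nonneg k : (0 : ℝ) ≤ k)]

lemma digitMass_window_le {D : ℕ} {C : ℝ} (hC : 0 < C) :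
    digitMass (window D C) ≤ if C ≤ D then 1 / (C * D) else 0 := by
  have hX : (D : ℝ) * (1 + 1 / C) = D + D / C := by ring
  have hM : (⌊(D : ℝ) * (1 + 1 / C)⌋₊ : ℝ) ≤ D + D / C := hX ▸ Nat.floor_le (by positivity)
  have hDC : 0 ≤ (D : ℝ) / C := by positivity
  split_ifs with h
  · have hD : (0 : ℝ) < D := hC.trans_le h
    rw [window, digitMass_Ioc (Nat.le_floor (by rw [hX]; linarith))]
    calc 1 / (D + 1 : ℝ) - 1 / (⌊(D : ℝ) * (1 + 1 / C)⌋₊ + 1)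
        ≤ 1 / (D + 1) - 1 / (D + D / C + 1) := by gcongr
      _ = D / C / ((D + 1) * (D + D / C + 1)) := by field_simp; ring
      _ ≤ D / C / (D * D) := by gcongr <;> linarith
      _ = 1 / (C * D) := by field_simp
  · have hlt : (D : ℝ) / C < 1 := (div_lt_one hC).2 (not_le.1 h)
    rw [window, Finset.Ioc_eq_empty fun hDM => ?_, digitMass, Finset.sum_empty]
    have : (D : ℝ) + 1 ≤ ⌊(D : ℝ) * (1 + 1 / C)⌋₊ := by exact_mod_cast hDM
    linarith

lemma le_digitMass_window {D : ℕ} {C : ℝ} (hC : 1 ≤ C) :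
    (if C ≤ D then 1 / (C * D) else 0) ≤ 12 * digitMass (window D C) := by
  split_ifs with h
  · have hC0 : 0 < C := by linarith
    have hD : (1 : ℝ) ≤ D := hC.trans h
    have hX : (D : ℝ) * (1 + 1 / C) = D + D / C := by ring
    have hDC : 1 ≤ (D : ℝ) / C := (one_le_div hC0).2 h
    have hDC' : (D : ℝ) / C ≤ D := div_le_self (by linarith) hC
    set M := ⌊(D : ℝ) * (1 + 1 / C)⌋₊ with hM_def
    have hM₁ : (M : ℝ) ≤ D + D / C := hX ▸ Nat.floor_le (by positivity)
    have hM₂ : (D + D / C : ℝ) < M + 1 := hX ▸ Nat.lt_floor_add_one _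
    have hDM : D + 1 ≤ M := Nat.le_floor (by push_cast; linarith)
    have hDM' : (D : ℝ) + 1 ≤ M := by exact_mod_cast hDM
    have hgap : (D : ℝ) / C / 2 ≤ M - D := by
      rcases le_or_gt ((D : ℝ) / C) 2 with h2 | h2 <;> linarith
    have hden : ((D : ℝ) + 1) * (M + 1) ≤ 6 * (D * D) := by nlinarith
    rw [window, ← hM_def, digitMass_Ioc (by omega)]
    calc 1 / (C * D) = 12 * ((D : ℝ) / C / 2 / (6 * (D * D))) := by field_simp; ring
      _ ≤ 12 * ((M - D) / ((D + 1) * (M + 1))) := by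
        gcongr
        · linarith
      _ = 12 * (1 / (D + 1) - 1 / (M + 1)) := by field_simp; ring
  · exact mul_nonneg (by norm_num) (digitMass_nonneg fun _ => one_le_of_mem_window)

lemma summable_digitMass_window_iff {c : ℕ → ℝ} {d : ℕ → ℕ} (hc : Tendsto c atTop atTop) :
    Summable (fun n => digitMass (window (d n) (c n))) ↔
      Summable (fun n => if c n ≤ (d n : ℝ) then 1 / (c n * (d n : ℝ)) else 0) := by
  have hc1 := hc.eventually_ge_atTop 1
  constructor
  · intro h
    refine (h.mul_left 12).of_norm_bounded_eventually_nat ?_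
    filter_upwards [hc1] with n hn
    rw [Real.norm_of_nonneg (by split_ifs <;> positivity)]
    exact le_digitMass_window hn
  · intro h
    refine h.of_norm_bounded_eventually_nat ?_
    filter_upwards [hc1] with n hn
    rw [Real.norm_of_nonneg (digitMass_nonneg fun _ => one_le_of_mem_window)]
    exact digitMass_window_le (by linarith)

lemma cfDigit_succ (j : ℕ) (x : ℝ) : cfDigit (j + 1) x = ⌊1 / gaussMap^[j] x⌋₊ := rfl

lemma infinite_setOf_iff_frequently_succ {p : ℕ → Prop} :
    {n | p n}.Infinite ↔ ∃ᶠ j in atTop, p (j + 1) := by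
  rw [← Nat.frequently_atTop_iff_infinite, ← frequently_map (m := fun j => j + 1),
    map_add_atTop_eq_nat]

end ContFracDigits

open ContFracDigits in
theorem zero_one_law_digit_strict_between_general (c : ℕ → ℝ) (d : ℕ → ℕ)
    (hc_inf : Tendsto c atTop atTop) :
    ((Summable (fun n => if c n ≤ (d n : ℝ) then 1 / (c n * (d n : ℝ)) else 0) →
        (volume.restrict (Set.Ico (0 : ℝ) 1))
          {x | Irrational x ∧
            {n : ℕ | d n < cfDigit n x ∧ (cfDigit n x : ℝ) ≤ d n * (1 + 1 / c n)}.Infinite} = 0) ∧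
      (¬ Summable (fun n => if c n ≤ (d n : ℝ) then 1 / (c n * (d n : ℝ)) else 0) →
        (volume.restrict (Set.Ico (0 : ℝ) 1))
          {x | Irrational x ∧
            {n : ℕ | d n < cfDigit n x ∧ (cfDigit n x : ℝ) ≤ d n * (1 + 1 / c n)}.Infinite} = 1)) := by
  set S : ℕ → Finset ℕ := fun j => window (d (j + 1)) (c (j + 1))
  have hS : ∀ j, ∀ k ∈ S j, 1 ≤ k := fun _ _ => one_le_of_mem_window
  have hsum := (summable_nat_add_iff 1).trans (summable_digitMass_window_iff (d := d) hc_inf)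
  set E : Set ℝ := {x | Irrational x ∧ ∃ᶠ j in atTop, ⌊1 / gaussMap^[j] x⌋₊ ∈ S j}
  have hset : {x | Irrational x ∧
      {n : ℕ | d n < cfDigit n x ∧ (cfDigit n x : ℝ) ≤ d n * (1 + 1 / c n)}.Infinite} = E := by
    ext x
    simp only [E, S, infinite_setOf_iff_frequently_succ, mem_window_iff, cfDigit_succ]
  rw [hset, ← Measure.restrict_congr_set Ioo_ae_eq_Ico]
  refine ⟨fun h => ?_, fun h => ?_⟩
  · rw [measure_eq_zero_iff_ae_notMem, ae_restrict_iff' measurableSet_Ioo]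
    filter_upwards [ae_eventually_floor_notMem hS (hsum.2 h)] with x hx hI hxE
    exact hxE.2 (hx hI)
  · have hae : ∀ᵐ x ∂volume.restrict (Ioo 0 1), x ∈ E := by
      rw [ae_restrict_iff' measurableSet_Ioo]
      filter_upwards [ae_frequently_floor_mem hS (mt hsum.1 h), ae_mem_unitIrrationals]
        with x hx hirr hI using ⟨(hirr hI).1, hx hI⟩
    rw [measure_congr (ae_eq_univ.2 (ae_iff.1 hae))]
    simp

theorem zero_one_law_digit_strict_between (c : ℕ → ℝ) (d : ℕ → ℕ)
    (hc : ∀ n, 0 < c n) (hd : ∀ n, 0 < d n)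
    (hc_inf : Tendsto c atTop atTop)
    (hd_inf : Tendsto (fun n => (d n : ℝ)) atTop atTop) :
    ((Summable (fun n => if c n ≤ (d n : ℝ) then 1 / (c n * (d n : ℝ)) else 0) →
        (volume.restrict (Set.Ico (0 : ℝ) 1))
          {x | Irrational x ∧
            {n : ℕ | d n < cfDigit n x ∧ (cfDigit n x : ℝ) ≤ d n * (1 + 1 / c n)}.Infinite} = 0) ∧
      (¬ Summable (fun n => if c n ≤ (d n : ℝ) then 1 / (c n * (d n : ℝ)) else 0) →
        (volume.restrict (Set.Ico (0 : ℝ) 1))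
          {x | Irrational x ∧
            {n : ℕ | d n < cfDigit n x ∧ (cfDigit n x : ℝ) ≤ d n * (1 + 1 / c n)}.Infinite} = 1)) :=
  zero_one_law_digit_strict_between_general c d hc_inf
end

section
/- Borel–Cantelli converse with weak dependence (Chandra): let P be a probability measure and (C_n) measurable sets with Σ_n P(C_n) = ∞. If there is q : ℕ → (0,∞) with Σ_m q(m) < ∞ such that for all i < j, P(C_i ∩ C_j) − P(C_i)P(C_j) ≤ q(j−i) · (P(C_i) + P(C_{i+1}) + P(C_j) + P(C_{j+1})), then P(limsup C_n) = 1. -/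
open MeasureTheory Filter Set Topology

/-!
With `s n = ∑ k < n, P (C k)`, Cauchy–Schwarz for `N = ∑ k < n, 𝟙 (C k)` on the set `{N > 0}`
gives `P (⋃ k < n, C k) ≥ s n ^ 2 / ∑ i, j < n, P (C i ∩ C j)`. The dependence condition bounds the
double sum by `s n ^ 2 + (1 + 8 Q) s n + 4 Q` with `Q = ∑ q`, because each index `i` meets every
weight `q d` at most twice (at `j = i ± d`). As `s n → ∞` the ratio tends to `1`, so `P (⋃ C) = 1`.
The shifted sequences `(C (n + m))ₙ` satisfy the same hypotheses, so every tail union, and hence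
`limsup C`, has probability one.
-/

theorem ENNReal.sq_lintegral_le_measure_univ_mul_lintegral_sq {α : Type*} [MeasurableSpace α]
    (μ : Measure α) {f : α → ENNReal} (hf : AEMeasurable f μ) :
    (∫⁻ x, f x ∂μ) ^ 2 ≤ μ univ * ∫⁻ x, f x ^ 2 ∂μ := by
  have holder := ENNReal.lintegral_mul_le_Lp_mul_Lq μ Real.HolderConjugate.two_two hf
    (aemeasurable_const (b := (1 : ENNReal)))
  simp only [Pi.mul_apply, mul_one, ENNReal.rpow_two, one_pow, lintegral_const, one_mul] at holder
  calc (∫⁻ x, f x ∂μ) ^ 2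
      ≤ ((∫⁻ x, f x ^ 2 ∂μ) ^ (1 / 2 : ℝ) * μ univ ^ (1 / 2 : ℝ)) ^ 2 := by gcongr
    _ = μ univ * ∫⁻ x, f x ^ 2 ∂μ := by
      rw [mul_pow, ← ENNReal.rpow_two, ← ENNReal.rpow_two, ← ENNReal.rpow_mul, ← ENNReal.rpow_mul]
      norm_num [mul_comm]

/-- The Chung–Erdős inequality. -/
theorem sq_sum_measure_le_measure_biUnion_mul_sum_sum_measure_inter {Ω ι : Type*}
    [MeasurableSpace Ω] (μ : Measure Ω) {C : ι → Set Ω} (hC : ∀ i, MeasurableSet (C i))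
    (I : Finset ι) :
    (∑ i ∈ I, μ (C i)) ^ 2 ≤ μ (⋃ i ∈ I, C i) * ∑ i ∈ I, ∑ j ∈ I, μ (C i ∩ C j) := by
  set A := ⋃ i ∈ I, C i
  set N : Ω → ENNReal := fun ω => ∑ i ∈ I, (C i).indicator 1 ω
  have hN : Measurable N := Finset.measurable_sum _ fun i _ => measurable_one.indicator (hC i)
  have hNA : N.support ⊆ A := fun ω hω => by
    obtain ⟨i, hi, hωi⟩ := Finset.exists_ne_zero_of_sum_ne_zero hω
    exact mem_biUnion hi (mem_of_indicator_ne_zero hωi)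
  have hN_sq : ∀ ω, N ω ^ 2 = ∑ i ∈ I, ∑ j ∈ I, (C i ∩ C j).indicator 1 ω := by
    intro ω
    simp only [N, sq, Finset.sum_mul_sum, Set.inter_indicator_one, Pi.mul_apply]
  have cs := ENNReal.sq_lintegral_le_measure_univ_mul_lintegral_sq (μ.restrict A) hN.aemeasurable
  rw [setLIntegral_eq_of_support_subset hNA, Measure.restrict_apply_univ] at cs
  calc (∑ i ∈ I, μ (C i)) ^ 2 = (∫⁻ ω, N ω ∂μ) ^ 2 := by
        rw [lintegral_finsetSum _ fun i _ => measurable_one.indicator (hC i)]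
        simp only [lintegral_indicator_one (hC _)]
    _ ≤ μ A * ∫⁻ ω in A, N ω ^ 2 ∂μ := cs
    _ ≤ μ A * ∫⁻ ω, N ω ^ 2 ∂μ := by gcongr; exact Measure.restrict_le_self
    _ = μ A * ∑ i ∈ I, ∑ j ∈ I, μ (C i ∩ C j) := by
        simp only [hN_sq]
        rw [lintegral_finsetSum _ fun i _ => Finset.measurable_sum _ fun j _ =>
          measurable_one.indicator ((hC i).inter (hC j))]
        simp only [lintegral_finsetSum _ fun j _ => measurable_one.indicator ((hC _).inter (hC j)),
          lintegral_indicator_one ((hC _).inter (hC _))]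

theorem sq_sum_measureReal_le_measureReal_biUnion_mul_sum_sum_measureReal_inter {Ω ι : Type*}
    [MeasurableSpace Ω] (μ : Measure Ω) [IsFiniteMeasure μ] {C : ι → Set Ω}
    (hC : ∀ i, MeasurableSet (C i)) (I : Finset ι) :
    (∑ i ∈ I, μ.real (C i)) ^ 2 ≤ μ.real (⋃ i ∈ I, C i) * ∑ i ∈ I, ∑ j ∈ I, μ.real (C i ∩ C j) := by
  have h := ENNReal.toReal_mono
    (ENNReal.mul_ne_top (measure_ne_top _ _) (ENNReal.sum_ne_top.mpr fun _ _ =>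
      ENNReal.sum_ne_top.mpr fun _ _ => measure_ne_top _ _))
    (sq_sum_measure_le_measure_biUnion_mul_sum_sum_measure_inter μ hC I)
  simp only [measureReal_def]
  simpa only [ENNReal.toReal_pow, ENNReal.toReal_mul, ENNReal.toReal_sum (fun _ _ => measure_ne_top _ _),
    ENNReal.toReal_sum (fun _ _ => ENNReal.sum_ne_top.mpr fun _ _ => measure_ne_top _ _)] using h

theorem sum_comp_dist_le_two_mul_tsum {q : ℕ → ℝ} (hq : ∀ m, 0 ≤ q m) (hqs : Summable q) (i : ℕ)
    (I : Finset ℕ) : ∑ j ∈ I, q (Nat.dist i j) ≤ 2 * ∑' m, q m := by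
  have sum_le_tsum_of_injOn : ∀ J : Finset ℕ, Set.InjOn (Nat.dist i) J →
      ∑ j ∈ J, q (Nat.dist i j) ≤ ∑' m, q m := fun J hJ => by
    rw [← Finset.sum_image hJ]
    exact hqs.sum_le_tsum _ fun m _ => hq m
  rw [← Finset.sum_filter_add_sum_filter_not I (· ≤ i), two_mul]
  refine add_le_add (sum_le_tsum_of_injOn _ fun a ha b hb h => ?_)
    (sum_le_tsum_of_injOn _ fun a ha b hb h => ?_) <;>
  · simp only [Finset.mem_coe, Finset.mem_filter] at ha hb
    unfold Nat.dist at h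
    omega

theorem one_le_of_sq_le_mul_of_tendsto_atTop {ι : Type*} {l : Filter ι} [l.NeBot] {s : ι → ℝ}
    (hs : Tendsto s l atTop) {α K L : ℝ} (h : ∀ i, s i ^ 2 ≤ α * (s i ^ 2 + K * s i + L)) :
    1 ≤ α := by
  have hlim : Tendsto (fun i => α * (1 + K * (s i)⁻¹ + L * ((s i)⁻¹) ^ 2)) l (𝓝 α) := by
    have h0 := tendsto_inv_atTop_zero.comp hs
    simpa using (tendsto_const_nhds (x := α)).mul (((tendsto_const_nhds (x := (1 : ℝ))).add
      (h0.const_mul K)).add ((h0.pow 2).const_mul L))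
  refine ge_of_tendsto hlim ((hs.eventually_gt_atTop 0).mono fun i hi => ?_)
  have key := h i
  field_simp
  linarith

section Dependence

variable {Ω : Type*} [MeasurableSpace Ω] (P : Measure Ω) {C : ℕ → Set Ω} {q : ℕ → ℝ}

theorem measureReal_inter_le_of_dependence (hq : ∀ m, 0 ≤ q m)
    (hdep : ∀ i j, i < j → P.real (C i ∩ C j) - P.real (C i) * P.real (C j) ≤
      q (j - i) * (P.real (C i) + P.real (C (i + 1)) + P.real (C j) + P.real (C (j + 1))))
    (i j : ℕ) :
    P.real (C i ∩ C j) ≤ P.real (C i) * P.real (C j) + (if i = j then P.real (C i) else 0) +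
      q (Nat.dist i j) * (P.real (C i) + P.real (C (i + 1)) + (P.real (C j) + P.real (C (j + 1)))) := by
  have hp : ∀ k, 0 ≤ P.real (C k) := fun k => measureReal_nonneg
  rcases lt_trichotomy i j with hij | rfl | hij
  · have := hdep i j hij
    rw [if_neg hij.ne, Nat.dist_eq_sub_of_le hij.le]
    linarith
  · rw [inter_self, if_pos rfl]
    nlinarith [hq (Nat.dist i i), hp i, hp (i + 1)]
  · have := hdep j i hij
    rw [if_neg hij.ne', Nat.dist_eq_sub_of_le_right hij.le, inter_comm]
    linarith

theorem sum_sum_measureReal_inter_le [IsProbabilityMeasure P] (hq : ∀ m, 0 ≤ q m)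
    (hqs : Summable q)
    (hdep : ∀ i j, i < j → P.real (C i ∩ C j) - P.real (C i) * P.real (C j) ≤
      q (j - i) * (P.real (C i) + P.real (C (i + 1)) + P.real (C j) + P.real (C (j + 1))))
    (n : ℕ) :
    ∑ i ∈ Finset.range n, ∑ j ∈ Finset.range n, P.real (C i ∩ C j) ≤
      (∑ k ∈ Finset.range n, P.real (C k)) ^ 2 +
        (1 + 8 * ∑' m, q m) * ∑ k ∈ Finset.range n, P.real (C k) + 4 * ∑' m, q m := by
  set p : ℕ → ℝ := fun k => P.real (C k)
  set a : ℕ → ℝ := fun k => p k + p (k + 1)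
  set s := ∑ k ∈ Finset.range n, p k
  set Q := ∑' m, q m
  have ha : ∑ k ∈ Finset.range n, a k ≤ 2 * s + 1 := by
    have hshift := Finset.sum_range_succ' p n
    rw [Finset.sum_range_succ] at hshift
    have hp₀ : 0 ≤ p 0 := measureReal_nonneg
    have hpn : p n ≤ 1 := measureReal_le_one
    rw [Finset.sum_add_distrib]
    linarith
  have hcross : ∑ i ∈ Finset.range n, ∑ j ∈ Finset.range n, q (Nat.dist i j) * (a i + a j) ≤
      4 * Q * (2 * s + 1) := by
    have hsymm : ∑ i ∈ Finset.range n, ∑ j ∈ Finset.range n, q (Nat.dist i j) * a j =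
        ∑ i ∈ Finset.range n, ∑ j ∈ Finset.range n, q (Nat.dist i j) * a i := by
      rw [Finset.sum_comm]
      simp only [Nat.dist_comm]
    calc _ = 2 * ∑ i ∈ Finset.range n, (∑ j ∈ Finset.range n, q (Nat.dist i j)) * a i := by
          simp only [mul_add, Finset.sum_add_distrib, hsymm, two_mul, Finset.sum_mul]
      _ ≤ 2 * ∑ i ∈ Finset.range n, 2 * Q * a i := by
          gcongr with i
          exact sum_comp_dist_le_two_mul_tsum hq hqs i _
      _ ≤ 4 * Q * (2 * s + 1) := by
          rw [← Finset.mul_sum]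
          linarith [mul_le_mul_of_nonneg_left ha (tsum_nonneg hq : 0 ≤ Q)]
  calc _ ≤ ∑ i ∈ Finset.range n, ∑ j ∈ Finset.range n,
        (p i * p j + (if i = j then p i else 0) + q (Nat.dist i j) * (a i + a j)) :=
        Finset.sum_le_sum fun i _ => Finset.sum_le_sum fun j _ =>
          measureReal_inter_le_of_dependence P hq hdep i j
    _ = s ^ 2 + s + ∑ i ∈ Finset.range n, ∑ j ∈ Finset.range n, q (Nat.dist i j) * (a i + a j) := by
        simp only [Finset.sum_add_distrib, Finset.sum_ite_eq, Finset.sum_ite_mem,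
          Finset.inter_self, ← Finset.sum_mul_sum, sq]
        rfl
    _ ≤ _ := by linarith

theorem measure_iUnion_eq_one_of_dependence [IsProbabilityMeasure P]
    (hC : ∀ n, MeasurableSet (C n)) (hdiv : ¬ Summable fun n => P.real (C n))
    (hq : ∀ m, 0 ≤ q m) (hqs : Summable q)
    (hdep : ∀ i j, i < j → P.real (C i ∩ C j) - P.real (C i) * P.real (C j) ≤
      q (j - i) * (P.real (C i) + P.real (C (i + 1)) + P.real (C j) + P.real (C (j + 1)))) :
    P (⋃ n, C n) = 1 := by
  set s : ℕ → ℝ := fun n => ∑ k ∈ Finset.range n, P.real (C k)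
  have hs : Tendsto s atTop atTop :=
    (not_summable_iff_tendsto_nat_atTop_of_nonneg fun _ => measureReal_nonneg).mp hdiv
  have hbound : ∀ n, s n ^ 2 ≤
      P.real (⋃ n, C n) * (s n ^ 2 + (1 + 8 * ∑' m, q m) * s n + 4 * ∑' m, q m) := fun n =>
    calc s n ^ 2 ≤ P.real (⋃ k ∈ Finset.range n, C k) *
          ∑ i ∈ Finset.range n, ∑ j ∈ Finset.range n, P.real (C i ∩ C j) :=
          sq_sum_measureReal_le_measureReal_biUnion_mul_sum_sum_measureReal_inter P hC _
      _ ≤ _ := mul_le_mul (measureReal_mono (iUnion₂_subset fun k _ => subset_iUnion C k))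
          (sum_sum_measureReal_inter_le P hq hqs hdep n)
          (Finset.sum_nonneg fun _ _ => Finset.sum_nonneg fun _ _ => measureReal_nonneg)
          measureReal_nonneg
  exact (ENNReal.toReal_eq_one_iff _).mp
    (le_antisymm measureReal_le_one (one_le_of_sq_le_mul_of_tendsto_atTop hs hbound))

end Dependence

theorem chandra_borel_cantelli {Ω : Type*} [MeasurableSpace Ω] (P : Measure Ω)
    [IsProbabilityMeasure P] (C : ℕ → Set Ω) (hC : ∀ n, MeasurableSet (C n))
    (hsum : ∑' n, P (C n) = ⊤)
    (q : ℕ → ℝ) (hq : ∀ m, 0 < q m) (hqs : Summable q)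
    (hdep : ∀ i j, i < j →
      (P (C i ∩ C j)).toReal - (P (C i)).toReal * (P (C j)).toReal ≤
        q (j - i) * ((P (C i)).toReal + (P (C (i + 1))).toReal +
          (P (C j)).toReal + (P (C (j + 1))).toReal)) :
    P (limsup C atTop) = 1 := by
  have hdiv : ¬ Summable fun n => P.real (C n) := fun h => by
    have := ENNReal.ofReal_tsum_of_nonneg (fun n => measureReal_nonneg) h
    simp [measureReal_def, hsum] at this
  have htail : ∀ m, P (⋃ n, C (n + m)) = 1 := fun m => by
    refine measure_iUnion_eq_one_of_dependence P (C := fun n => C (n + m)) (fun n => hC (n + m))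
      ?_ (fun k => (hq k).le) hqs ?_
    · exact (summable_nat_add_iff (f := fun n => P.real (C n)) m).not.mpr hdiv
    · intro i j hij
      have h := hdep (i + m) (j + m) (by omega)
      rwa [Nat.add_sub_add_right, add_right_comm i, add_right_comm j] at h
  have hU : ∀ m, MeasurableSet (⋃ n, C (n + m)) := fun m => .iUnion fun n => hC (n + m)
  have hlimsup : limsup C atTop = ⋂ m, ⋃ n, C (n + m) := by
    simp_rw [limsup_eq_iInf_iSup_of_nat, iSup_ge_eq_iSup_nat_add]
    rfl
  rw [hlimsup, ← mem_ae_iff_prob_eq_one (.iInter hU)]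
  exact countable_iInter_mem.mpr fun m => (mem_ae_iff_prob_eq_one (hU m)).mpr (htail m)
end
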